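/- arXiv:math/0607704 — 9 statements merged into one kernel-verified Lean document; each statement's English description precedes it below -/
import Mathlib

section
/- Let A = [[a,b],[c,d]] be a nonnegative column-allowable 2×2 real matrix. If A has no null row (i.e. a+b > 0 and c+d > 0), then τ(A) = |√(ad) − √(bc)| / (√(ad) + √(bc)); if A has a null row, then τ(A) = 0 (i.e. d_columns(A'A) = 0 for every admissible A'). -/
open Matrix

/-- A 2×2 real matrix is nonnegative and column-allowable. -/
def ColAllowable (A : Matrix (Fin 2) (Fin 2) ℝ) : Prop :=
  (∀ i j, 0 ≤ A i j) ∧ 0 < A 0 0 + A 1 0 ∧ 0 < A 0 1 + A 1 1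

/-- The distance between the (normalized) columns of `A`. -/
noncomputable def dcols (A : Matrix (Fin 2) (Fin 2) ℝ) : ℝ :=
  |A.det| / ((A 0 0 + A 1 0) * (A 0 1 + A 1 1))

/-- The contraction coefficient `τ(A)`. -/
noncomputable def tau (A : Matrix (Fin 2) (Fin 2) ℝ) : ℝ :=
  sSup ((fun B => dcols (B * A) / dcols B) '' {B | ColAllowable B ∧ dcols B ≠ 0})

/-!
If `B` has column sums `u, v`, then `B * A` has column sums `u a + v c, u b + v d` and
`det (B * A) = det B * det A`, so `dcols (B * A) / dcols B = |ad - bc| u v / ((u a + v c) (u b + v d))`,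
and diagonal matrices `B` realise every pair `u, v > 0`. Since `√(ad) √(bc) = √(ab) √(cd)`, AM-GM gives
`(u a + v c) (u b + v d) ≥ u v (√(ad) + √(bc))²`, with equality when `u √(ab) = v √(cd)`; together with
`|ad - bc| = |√(ad) - √(bc)| (√(ad) + √(bc))` this yields the value of `τ`. A null row forces `det A = 0`.
-/

lemma abs_sub_eq_abs_sqrt_sub_mul_sqrt_add {x y : ℝ} (hx : 0 ≤ x) (hy : 0 ≤ y) :
    |x - y| = |√x - √y| * (√x + √y) := by
  rw [← abs_of_nonneg (add_nonneg (Real.sqrt_nonneg x) (Real.sqrt_nonneg y)), ← abs_mul,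
    mul_comm, ← sq_sub_sq, Real.sq_sqrt hx, Real.sq_sqrt hy]

lemma sqrt_mul_mul_sqrt_mul {a b c d : ℝ} (ha : 0 ≤ a) (hb : 0 ≤ b) (hd : 0 ≤ d) :
    √(a * d) * √(b * c) = √(a * b) * √(c * d) := by
  rw [← Real.sqrt_mul (mul_nonneg ha hd), ← Real.sqrt_mul (mul_nonneg ha hb)]
  ring_nf

lemma mul_mul_sq_sqrt_add_sqrt_le {a b c d u v : ℝ} (ha : 0 ≤ a) (hb : 0 ≤ b) (hc : 0 ≤ c)
    (hd : 0 ≤ d) :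
    u * v * (√(a * d) + √(b * c)) ^ 2 ≤ (u * a + v * c) * (u * b + v * d) := by
  calc u * v * (√(a * d) + √(b * c)) ^ 2
      = u * v * (a * d + b * c) + 2 * (u * √(a * b)) * (v * √(c * d)) := by
        rw [add_sq, Real.sq_sqrt (by positivity), Real.sq_sqrt (by positivity), mul_assoc 2,
          sqrt_mul_mul_sqrt_mul ha hb hd]
        ring
    _ ≤ u * v * (a * d + b * c) + (u * √(a * b)) ^ 2 + (v * √(c * d)) ^ 2 := by
        linarith [two_mul_le_add_sq (u * √(a * b)) (v * √(c * d))]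
    _ = (u * a + v * c) * (u * b + v * d) := by
        rw [mul_pow, mul_pow, Real.sq_sqrt (by positivity), Real.sq_sqrt (by positivity)]
        ring

/- Equality in `mul_mul_sq_sqrt_add_sqrt_le` needs `u √(ab) = v √(cd)`; perturbing that choice
by `δ` also covers the cases `ab = 0` or `cd = 0`. -/
lemma mul_add_mul_mul_le_sq_add_mul {a b c d δ : ℝ} (ha : 0 ≤ a) (hb : 0 ≤ b) (hc : 0 ≤ c)
    (hd : 0 ≤ d) (hδ : 0 ≤ δ) :
    ((√(c * d) + δ) * a + (√(a * b) + δ) * c) * ((√(c * d) + δ) * b + (√(a * b) + δ) * d) ≤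
      (√(c * d) + δ) * (√(a * b) + δ) *
        ((√(a * d) + √(b * c)) ^ 2 + δ * (√(a * b) + √(c * d))) := by
  set p := √(a * b)
  set q := √(c * d)
  have hp2 : p ^ 2 = a * b := Real.sq_sqrt (by positivity)
  have hq2 : q ^ 2 = c * d := Real.sq_sqrt (by positivity)
  have hs : (√(a * d) + √(b * c)) ^ 2 = a * d + b * c + 2 * p * q := by
    rw [add_sq, Real.sq_sqrt (by positivity), Real.sq_sqrt (by positivity), mul_assoc 2,
      sqrt_mul_mul_sqrt_mul ha hb hd]
    ring
  rw [hs]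
  have h1 : 0 ≤ (q + δ) ^ 2 * p * δ := by positivity
  have h2 : 0 ≤ (p + δ) ^ 2 * q * δ := by positivity
  linear_combination h1 + h2 - (q + δ) ^ 2 * hp2 - (p + δ) ^ 2 * hq2

lemma abs_mul_sub_mul_mul_div_le {a b c d u v : ℝ} (ha : 0 ≤ a) (hb : 0 ≤ b) (hc : 0 ≤ c)
    (hd : 0 ≤ d) (hu : 0 < u) (hv : 0 < v) (hs : 0 < √(a * d) + √(b * c)) :
    |a * d - b * c| * (u * v) / ((u * a + v * c) * (u * b + v * d)) ≤
      |√(a * d) - √(b * c)| / (√(a * d) + √(b * c)) :=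
  calc |a * d - b * c| * (u * v) / ((u * a + v * c) * (u * b + v * d))
      ≤ |a * d - b * c| * (u * v) / (u * v * (√(a * d) + √(b * c)) ^ 2) :=
        div_le_div_of_nonneg_left (by positivity) (by positivity)
          (mul_mul_sq_sqrt_add_sqrt_le ha hb hc hd)
    _ = |√(a * d) - √(b * c)| / (√(a * d) + √(b * c)) := by
        rw [abs_sub_eq_abs_sqrt_sub_mul_sqrt_add (by positivity) (by positivity)]
        field_simp

lemma dcols_mul_div_dcols {A B : Matrix (Fin 2) (Fin 2) ℝ} (hB : dcols B ≠ 0) :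
    dcols (B * A) / dcols B =
      |A.det| * ((B 0 0 + B 1 0) * (B 0 1 + B 1 1)) /
        (((B 0 0 + B 1 0) * A 0 0 + (B 0 1 + B 1 1) * A 1 0) *
          ((B 0 0 + B 1 0) * A 0 1 + (B 0 1 + B 1 1) * A 1 1)) := by
  have hdet : B.det ≠ 0 := fun h => hB (by simp [dcols, h])
  have hsums : (B 0 0 + B 1 0) * (B 0 1 + B 1 1) ≠ 0 := fun h => hB (by simp [dcols, h])
  simp only [dcols, det_mul, abs_mul, mul_apply, Fin.sum_univ_two]
  field_simp
  ring

lemma colAllowable_diagonal {u v : ℝ} (hu : 0 < u) (hv : 0 < v) :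
    ColAllowable (diagonal ![u, v]) := by
  refine ⟨fun i j => ?_, by simpa using hu, by simpa using hv⟩
  fin_cases i <;> fin_cases j <;> simp [hu.le, hv.le]

lemma dcols_diagonal {u v : ℝ} (hu : 0 < u) (hv : 0 < v) : dcols (diagonal ![u, v]) = 1 := by
  simp [dcols, abs_of_pos (mul_pos hu hv), hu.ne', hv.ne']

section Tau

open Filter Topology

variable {A : Matrix (Fin 2) (Fin 2) ℝ}

lemma div_le_tau (hbdd : BddAbove ((fun B => dcols (B * A) / dcols B) ''
      {B | ColAllowable B ∧ dcols B ≠ 0})) {u v : ℝ} (hu : 0 < u) (hv : 0 < v) :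
    |A.det| * (u * v) / ((u * A 0 0 + v * A 1 0) * (u * A 0 1 + v * A 1 1)) ≤ tau A := by
  have hdB : dcols (diagonal ![u, v]) ≠ 0 := by simp [dcols_diagonal hu hv]
  refine le_csSup_of_le hbdd ⟨_, ⟨colAllowable_diagonal hu hv, hdB⟩, rfl⟩ (le_of_eq ?_)
  simp [dcols_mul_div_dcols hdB]

theorem tau_eq_of_sqrt_add_sqrt_pos (hA : ∀ i j, 0 ≤ A i j)
    (hs : 0 < √(A 0 0 * A 1 1) + √(A 0 1 * A 1 0)) :
    tau A = |√(A 0 0 * A 1 1) - √(A 0 1 * A 1 0)| / (√(A 0 0 * A 1 1) + √(A 0 1 * A 1 0)) := by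
  have ha := hA 0 0
  have hb := hA 0 1
  have hc := hA 1 0
  have hd := hA 1 1
  set s := √(A 0 0 * A 1 1) + √(A 0 1 * A 1 0)
  have hub : ∀ x ∈ (fun B => dcols (B * A) / dcols B) '' {B | ColAllowable B ∧ dcols B ≠ 0},
      x ≤ |√(A 0 0 * A 1 1) - √(A 0 1 * A 1 0)| / s := by
    rintro _ ⟨B, ⟨hB, hdB⟩, rfl⟩
    simp only [dcols_mul_div_dcols hdB, det_fin_two]
    exact abs_mul_sub_mul_mul_div_le ha hb hc hd hB.2.1 hB.2.2 hs
  refine le_antisymm (Real.sSup_le hub (by positivity)) ?_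
  set K := √(A 0 0 * A 0 1) + √(A 1 0 * A 1 1)
  have hlim : Tendsto (fun δ => |A.det| / (s ^ 2 + δ * K)) (𝓝[>] 0)
      (𝓝 (|√(A 0 0 * A 1 1) - √(A 0 1 * A 1 0)| / s)) := by
    have hcont : ContinuousAt (fun δ => |A.det| / (s ^ 2 + δ * K)) 0 :=
      continuousAt_const.div (by fun_prop) (by simpa using hs.ne')
    convert hcont.tendsto.mono_left nhdsWithin_le_nhds using 2
    rw [det_fin_two, abs_sub_eq_abs_sqrt_sub_mul_sqrt_add (x := A 0 0 * A 1 1) (y := A 0 1 * A 1 0)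
      (by positivity) (by positivity)]
    field_simp
    simp only [s]
    ring
  refine le_of_tendsto hlim (eventually_nhdsWithin_of_forall fun δ (hδ : 0 < δ) => ?_)
  have hu : 0 < √(A 1 0 * A 1 1) + δ := by positivity
  have hv : 0 < √(A 0 0 * A 0 1) + δ := by positivity
  calc |A.det| / (s ^ 2 + δ * K)
      = |A.det| * ((√(A 1 0 * A 1 1) + δ) * (√(A 0 0 * A 0 1) + δ)) /
          ((√(A 1 0 * A 1 1) + δ) * (√(A 0 0 * A 0 1) + δ) * (s ^ 2 + δ * K)) := by
        field_simp
    _ ≤ _ := div_le_div_of_nonneg_left (by positivity)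
        (lt_of_lt_of_le (by positivity) (mul_mul_sq_sqrt_add_sqrt_le ha hb hc hd))
        (mul_add_mul_mul_le_sq_add_mul ha hb hc hd hδ.le)
    _ ≤ tau A := div_le_tau ⟨_, hub⟩ hu hv

lemma sqrt_add_sqrt_pos (hA : ColAllowable A) (hrows : 0 < A 0 0 + A 0 1 ∧ 0 < A 1 0 + A 1 1) :
    0 < √(A 0 0 * A 1 1) + √(A 0 1 * A 1 0) := by
  obtain ⟨hA, hcol₀, hcol₁⟩ := hA
  have hprod : 0 < A 0 1 * A 1 0 ∨ 0 < A 0 0 * A 1 1 := by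
    rcases (hA 0 0).eq_or_lt with ha | ha
    · left; exact mul_pos (by linarith) (by linarith)
    rcases (hA 1 1).eq_or_lt with hd | hd
    · left; exact mul_pos (by linarith) (by linarith)
    · right; exact mul_pos ha hd
  rcases hprod with hbc | had
  · exact add_pos_of_nonneg_of_pos (Real.sqrt_nonneg _) (Real.sqrt_pos.2 hbc)
  · exact add_pos_of_pos_of_nonneg (Real.sqrt_pos.2 had) (Real.sqrt_nonneg _)

lemma det_eq_zero_of_not_rowSums_pos (hA : ∀ i j, 0 ≤ A i j)
    (hrow : ¬(0 < A 0 0 + A 0 1 ∧ 0 < A 1 0 + A 1 1)) : A.det = 0 := by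
  rw [not_and_or, not_lt, not_lt] at hrow
  rcases hrow with hrow | hrow
  · exact det_eq_zero_of_row_eq_zero 0 (Fin.forall_fin_two.2
      ⟨by linarith [hA 0 0, hA 0 1], by linarith [hA 0 0, hA 0 1]⟩)
  · exact det_eq_zero_of_row_eq_zero 1 (Fin.forall_fin_two.2
      ⟨by linarith [hA 1 0, hA 1 1], by linarith [hA 1 0, hA 1 1]⟩)

lemma dcols_mul_eq_zero_of_det_eq_zero (h : A.det = 0) (B : Matrix (Fin 2) (Fin 2) ℝ) :
    dcols (B * A) = 0 := by
  simp [dcols, h]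

lemma tau_eq_zero_of_det_eq_zero (h : A.det = 0) : tau A = 0 := by
  have hzero : ∀ x ∈ (fun B => dcols (B * A) / dcols B) '' {B | ColAllowable B ∧ dcols B ≠ 0},
      x = 0 := by
    rintro _ ⟨B, -, rfl⟩
    simp [dcols_mul_eq_zero_of_det_eq_zero h]
  exact le_antisymm (Real.sSup_le (fun x hx => (hzero x hx).le) le_rfl)
    (Real.sSup_nonneg fun x hx => (hzero x hx).ge)

end Tau

theorem stmt0 (A : Matrix (Fin 2) (Fin 2) ℝ) (hA : ColAllowable A) :
    (0 < A 0 0 + A 0 1 ∧ 0 < A 1 0 + A 1 1 →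
      tau A = |Real.sqrt (A 0 0 * A 1 1) - Real.sqrt (A 0 1 * A 1 0)| /
        (Real.sqrt (A 0 0 * A 1 1) + Real.sqrt (A 0 1 * A 1 0))) ∧
    (¬(0 < A 0 0 + A 0 1 ∧ 0 < A 1 0 + A 1 1) →
      tau A = 0 ∧ ∀ B, ColAllowable B → dcols B ≠ 0 → dcols (B * A) = 0) := by
  refine ⟨fun hrows => tau_eq_of_sqrt_add_sqrt_pos hA.1 (sqrt_add_sqrt_pos hA hrows),
    fun hrow => ?_⟩
  have hdet := det_eq_zero_of_not_rowSums_pos hA.1 hrow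
  exact ⟨tau_eq_zero_of_det_eq_zero hdet, fun B _ _ => dcols_mul_eq_zero_of_det_eq_zero hdet B⟩
end

section
/- Let A = [[a,b],[c,d]] be a 2×2 real matrix with all entries positive. Then for every nonnegative column-allowable 2×2 matrix A' with d_columns(A') ≠ 0 one has d_rows(AA')/d_columns(A') ≤ |det A| / (min(a,b) · min(c,d)). -/
open Matrix

/-- The distance between the (normalized) rows of `A`. -/
noncomputable def drows (A : Matrix (Fin 2) (Fin 2) ℝ) : ℝ := dcols Aᵀ

theorem stmt3 (A : Matrix (Fin 2) (Fin 2) ℝ) (hA : ∀ i j, 0 < A i j)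
    (B : Matrix (Fin 2) (Fin 2) ℝ) (hB : ColAllowable B) (hB0 : dcols B ≠ 0) :
    drows (A * B) / dcols B ≤
      |A.det| / (min (A 0 0) (A 0 1) * min (A 1 0) (A 1 1)) := by
  obtain ⟨hBn, hc1, hc2⟩ := hB
  have ha := hA 0 0; have hb := hA 0 1; have hc := hA 1 0; have hd := hA 1 1
  have he := hBn 0 0; have hf := hBn 0 1; have hg := hBn 1 0; have hh := hBn 1 1
  have hdetB : B.det ≠ 0 := by
    intro h
    exact hB0 (by simp [dcols, h])
  have hS : 0 < (B 0 0 + B 1 0) * (B 0 1 + B 1 1) := mul_pos hc1 hc2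
  have hdc : 0 < dcols B := div_pos (abs_pos.mpr hdetB) hS
  rw [div_le_iff₀ hdc]
  have hm1 : 0 < min (A 0 0) (A 0 1) := lt_min ha hb
  have hm2 : 0 < min (A 1 0) (A 1 1) := lt_min hc hd
  simp only [drows, dcols, Matrix.transpose_apply, Matrix.det_transpose, Matrix.det_mul]
  rw [div_mul_div_comm]
  have hP : 0 < ((A * B) 0 0 + (A * B) 0 1) := by
    simp only [Matrix.mul_apply, Fin.sum_univ_two]
    nlinarith [min_le_left (A 0 0) (A 0 1), min_le_right (A 0 0) (A 0 1)]
  have hQ : 0 < ((A * B) 1 0 + (A * B) 1 1) := by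
    simp only [Matrix.mul_apply, Fin.sum_univ_two]
    nlinarith [min_le_left (A 1 0) (A 1 1), min_le_right (A 1 0) (A 1 1)]
  rw [div_le_div_iff₀ (mul_pos hP hQ) (mul_pos (mul_pos hm1 hm2) hS), abs_mul]
  have key : min (A 0 0) (A 0 1) * min (A 1 0) (A 1 1) *
      ((B 0 0 + B 1 0) * (B 0 1 + B 1 1)) ≤
      ((A * B) 0 0 + (A * B) 0 1) * ((A * B) 1 0 + (A * B) 1 1) := by
    simp only [Matrix.mul_apply, Fin.sum_univ_two]
    have h1 : min (A 0 0) (A 0 1) * (B 0 0 + B 1 0) ≤ A 0 0 * B 0 0 + A 0 1 * B 1 0 := by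
      nlinarith [min_le_left (A 0 0) (A 0 1), min_le_right (A 0 0) (A 0 1)]
    have h2 : min (A 1 0) (A 1 1) * (B 0 1 + B 1 1) ≤ A 1 0 * B 0 1 + A 1 1 * B 1 1 := by
      nlinarith [min_le_left (A 1 0) (A 1 1), min_le_right (A 1 0) (A 1 1)]
    have n1 : 0 ≤ (A 0 0 * B 0 0 + A 0 1 * B 1 0) := by positivity
    have n2 : 0 ≤ (A 0 0 * B 0 1 + A 0 1 * B 1 1) := by positivity
    have n3 : 0 ≤ (A 1 0 * B 0 0 + A 1 1 * B 1 0) := by positivity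
    have n4 : 0 ≤ (A 1 0 * B 0 1 + A 1 1 * B 1 1) := by positivity
    have h3 := mul_le_mul h1 h2 (by positivity) n1
    nlinarith [mul_nonneg n1 n3, mul_nonneg n2 n3, mul_nonneg n2 n4]
  nlinarith [mul_le_mul_of_nonneg_left key (mul_nonneg (abs_nonneg A.det) (abs_nonneg B.det))]
end

section
/- Let A and A' be nonnegative column-allowable 2×2 real matrices and let (Aₙ)ₙ be a sequence of nonnegative column-allowable 2×2 matrices with d_columns(Aₙ) → 0 as n → ∞. Then d_columns(A Aₙ A') → 0; if moreover all entries of A are positive, then also d_rows(A Aₙ A') → 0. -/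
open Matrix Filter

lemma my_mul_nonneg {A B : Matrix (Fin 2) (Fin 2) ℝ}
    (hA : ∀ i j, 0 ≤ A i j) (hB : ∀ i j, 0 ≤ B i j) :
    ∀ i j, 0 ≤ (A * B) i j := by
  intro i j
  simp only [Matrix.mul_apply, Fin.sum_univ_two]
  have h1 := hA i 0; have h2 := hA i 1; have h3 := hB 0 j; have h4 := hB 1 j
  positivity

lemma my_dcols_nonneg {A : Matrix (Fin 2) (Fin 2) ℝ} (h : ∀ i j, 0 ≤ A i j) :
    0 ≤ dcols A := by
  unfold dcols
  have h1 := h 0 0; have h2 := h 1 0; have h3 := h 0 1; have h4 := h 1 1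
  positivity

lemma my_squeeze {f g : ℕ → ℝ} (K : ℝ) (h0 : ∀ n, 0 ≤ f n)
    (hle : ∀ n, f n ≤ K * g n) (hg : Tendsto g atTop (nhds 0)) :
    Tendsto f atTop (nhds 0) := by
  have h2 : Tendsto (fun n => K * g n) atTop (nhds 0) := by
    simpa using hg.const_mul K
  exact squeeze_zero h0 hle h2

lemma my_arith1 {u0 u1 a b c d m s0 s1 : ℝ} (h0 : m * s0 ≤ u0) (h1 : m * s1 ≤ u1)
    (hm : 0 < m) (hs0 : 0 < s0) (hs1 : 0 < s1) (ha : 0 ≤ a) (hb : 0 ≤ b)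
    (hc : 0 ≤ c) (hd : 0 ≤ d) :
    m ^ 2 * (a * d + b * c) * (s0 * s1) ≤ (u0 * a + u1 * c) * (u0 * b + u1 * d) := by
  have hu0 : 0 ≤ u0 := le_trans (by positivity) h0
  have hu1 : 0 ≤ u1 := le_trans (by positivity) h1
  have key : (m * s0) * (m * s1) ≤ u0 * u1 :=
    mul_le_mul h0 h1 (by positivity) hu0
  nlinarith [mul_le_mul_of_nonneg_right key (add_nonneg (mul_nonneg ha hd) (mul_nonneg hb hc)),
    mul_nonneg (mul_nonneg (mul_nonneg hu0 hu0) ha) hb,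
    mul_nonneg (mul_nonneg (mul_nonneg hu1 hu1) hc) hd]

lemma my_arith2 {v00 v01 v10 v11 r0 r1 m s0 s1 : ℝ}
    (h00 : m * s0 ≤ v00) (h11 : m * s1 ≤ v11) (h01 : 0 ≤ v01) (h10 : 0 ≤ v10)
    (hr0 : 0 ≤ r0) (hr1 : 0 ≤ r1) (hm : 0 < m) (hs0 : 0 < s0) (hs1 : 0 < s1) :
    m ^ 2 * (r0 * r1) * (s0 * s1) ≤ (v00 * r0 + v01 * r1) * (v10 * r0 + v11 * r1) := by
  have hv00 : 0 ≤ v00 := le_trans (by positivity) h00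
  have hv11 : 0 ≤ v11 := le_trans (by positivity) h11
  have key : (m * s0) * (m * s1) ≤ v00 * v11 :=
    mul_le_mul h00 h11 (by positivity) hv00
  nlinarith [mul_le_mul_of_nonneg_right key (mul_nonneg hr0 hr1),
    mul_nonneg (mul_nonneg (mul_nonneg hv00 h10) hr0) hr0,
    mul_nonneg (mul_nonneg (mul_nonneg h01 hv11) hr1) hr1,
    mul_nonneg (mul_nonneg (mul_nonneg h01 h10) hr0) hr1]

lemma col_key (A A' B : Matrix (Fin 2) (Fin 2) ℝ) (hA : ColAllowable A)
    (hA' : ColAllowable A') (hB : ColAllowable B) :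
    dcols (A * B * A') ≤
      (|A.det| * |A'.det| /
        ((min (A 0 0 + A 1 0) (A 0 1 + A 1 1)) ^ 2 *
          (A' 0 0 * A' 1 1 + A' 0 1 * A' 1 0))) * dcols B := by
  obtain ⟨hAn, hAc0, hAc1⟩ := hA
  obtain ⟨hA'n, hA'c0, hA'c1⟩ := hA'
  obtain ⟨hBn, hBc0, hBc1⟩ := hB
  have hdet : (A * B * A').det = A.det * B.det * A'.det := by
    rw [det_mul, det_mul]
  by_cases hp0 : A' 0 0 * A' 1 1 + A' 0 1 * A' 1 0 = 0
  · have h1 : A'.det = 0 := by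
      rw [det_fin_two]
      nlinarith [mul_nonneg (hA'n 0 0) (hA'n 1 1), mul_nonneg (hA'n 0 1) (hA'n 1 0)]
    have hL : dcols (A * B * A') = 0 := by
      unfold dcols
      rw [hdet, h1]
      simp
    rw [hL, h1]
    simp
  · have hpn : 0 ≤ A' 0 0 * A' 1 1 + A' 0 1 * A' 1 0 := by
      have h1 := hA'n 0 0; have h2 := hA'n 1 1; have h3 := hA'n 0 1; have h4 := hA'n 1 0
      positivity
    have hp1 : 0 < A' 0 0 * A' 1 1 + A' 0 1 * A' 1 0 := lt_of_le_of_ne hpn (Ne.symm hp0)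
    have hm0 : 0 < min (A 0 0 + A 1 0) (A 0 1 + A 1 1) := lt_min hAc0 hAc1
    have hu0 : min (A 0 0 + A 1 0) (A 0 1 + A 1 1) * (B 0 0 + B 1 0) ≤
        (A 0 0 + A 1 0) * B 0 0 + (A 0 1 + A 1 1) * B 1 0 := by
      nlinarith [mul_le_mul_of_nonneg_right
          (min_le_left (A 0 0 + A 1 0) (A 0 1 + A 1 1)) (hBn 0 0),
        mul_le_mul_of_nonneg_right
          (min_le_right (A 0 0 + A 1 0) (A 0 1 + A 1 1)) (hBn 1 0)]
    have hu1 : min (A 0 0 + A 1 0) (A 0 1 + A 1 1) * (B 0 1 + B 1 1) ≤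
        (A 0 0 + A 1 0) * B 0 1 + (A 0 1 + A 1 1) * B 1 1 := by
      nlinarith [mul_le_mul_of_nonneg_right
          (min_le_left (A 0 0 + A 1 0) (A 0 1 + A 1 1)) (hBn 0 1),
        mul_le_mul_of_nonneg_right
          (min_le_right (A 0 0 + A 1 0) (A 0 1 + A 1 1)) (hBn 1 1)]
    have e0 : (A * B * A') 0 0 + (A * B * A') 1 0 =
        ((A 0 0 + A 1 0) * B 0 0 + (A 0 1 + A 1 1) * B 1 0) * A' 0 0 +
        ((A 0 0 + A 1 0) * B 0 1 + (A 0 1 + A 1 1) * B 1 1) * A' 1 0 := by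
      simp [Matrix.mul_apply, Fin.sum_univ_two]
      ring
    have e1 : (A * B * A') 0 1 + (A * B * A') 1 1 =
        ((A 0 0 + A 1 0) * B 0 0 + (A 0 1 + A 1 1) * B 1 0) * A' 0 1 +
        ((A 0 0 + A 1 0) * B 0 1 + (A 0 1 + A 1 1) * B 1 1) * A' 1 1 := by
      simp [Matrix.mul_apply, Fin.sum_univ_two]
      ring
    have hD : min (A 0 0 + A 1 0) (A 0 1 + A 1 1) ^ 2 *
          (A' 0 0 * A' 1 1 + A' 0 1 * A' 1 0) * ((B 0 0 + B 1 0) * (B 0 1 + B 1 1)) ≤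
        ((A * B * A') 0 0 + (A * B * A') 1 0) * ((A * B * A') 0 1 + (A * B * A') 1 1) := by
      rw [e0, e1]
      exact my_arith1 hu0 hu1 hm0 hBc0 hBc1 (hA'n 0 0) (hA'n 0 1) (hA'n 1 0) (hA'n 1 1)
    have key : dcols (A * B * A') ≤ |A.det| * |B.det| * |A'.det| /
        (min (A 0 0 + A 1 0) (A 0 1 + A 1 1) ^ 2 *
          (A' 0 0 * A' 1 1 + A' 0 1 * A' 1 0) * ((B 0 0 + B 1 0) * (B 0 1 + B 1 1))) := by
      unfold dcols
      rw [hdet, abs_mul, abs_mul]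
      exact div_le_div_of_nonneg_left (by positivity) (by positivity) hD
    refine key.trans (le_of_eq ?_)
    unfold dcols
    rw [div_mul_div_comm]
    rw [div_eq_div_iff (by positivity) (by positivity)]
    ring

lemma row_key (A A' B : Matrix (Fin 2) (Fin 2) ℝ) (hApos : ∀ i j, 0 < A i j)
    (hA' : ColAllowable A') (hB : ColAllowable B) :
    drows (A * B * A') ≤
      (|A.det| * |A'.det| /
        ((min (min (A 0 0) (A 0 1)) (min (A 1 0) (A 1 1))) ^ 2 *
          ((A' 0 0 + A' 0 1) * (A' 1 0 + A' 1 1)))) * dcols B := by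
  obtain ⟨hA'n, hA'c0, hA'c1⟩ := hA'
  obtain ⟨hBn, hBc0, hBc1⟩ := hB
  have hdet : (A * B * A').det = A.det * B.det * A'.det := by
    rw [det_mul, det_mul]
  have hdr : drows (A * B * A') = |(A * B * A').det| /
      (((A * B * A') 0 0 + (A * B * A') 0 1) * ((A * B * A') 1 0 + (A * B * A') 1 1)) := by
    unfold drows dcols
    rw [det_transpose]
    simp [Matrix.transpose_apply]
  by_cases hq0 : (A' 0 0 + A' 0 1) * (A' 1 0 + A' 1 1) = 0
  · have h1 : A'.det = 0 := by
      rcases mul_eq_zero.mp hq0 with h | h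
      · have h00 : A' 0 0 = 0 := by linarith [hA'n 0 0, hA'n 0 1]
        have h01 : A' 0 1 = 0 := by linarith [hA'n 0 0, hA'n 0 1]
        rw [det_fin_two, h00, h01]; ring
      · have h10 : A' 1 0 = 0 := by linarith [hA'n 1 0, hA'n 1 1]
        have h11 : A' 1 1 = 0 := by linarith [hA'n 1 0, hA'n 1 1]
        rw [det_fin_two, h10, h11]; ring
    have hL : drows (A * B * A') = 0 := by
      rw [hdr, hdet, h1]
      simp
    rw [hL, h1, hq0]
    simp
  · have hqn : 0 ≤ (A' 0 0 + A' 0 1) * (A' 1 0 + A' 1 1) := by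
      have h1 := hA'n 0 0; have h2 := hA'n 0 1; have h3 := hA'n 1 0; have h4 := hA'n 1 1
      positivity
    have hq1 : 0 < (A' 0 0 + A' 0 1) * (A' 1 0 + A' 1 1) := lt_of_le_of_ne hqn (Ne.symm hq0)
    have hm0 : 0 < min (min (A 0 0) (A 0 1)) (min (A 1 0) (A 1 1)) := by
      simp only [lt_min_iff]
      exact ⟨⟨hApos 0 0, hApos 0 1⟩, hApos 1 0, hApos 1 1⟩
    have hmle : ∀ i j, min (min (A 0 0) (A 0 1)) (min (A 1 0) (A 1 1)) ≤ A i j := by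
      intro i j
      fin_cases i <;> fin_cases j
      · exact le_trans (min_le_left _ _) (min_le_left _ _)
      · exact le_trans (min_le_left _ _) (min_le_right _ _)
      · exact le_trans (min_le_right _ _) (min_le_left _ _)
      · exact le_trans (min_le_right _ _) (min_le_right _ _)
    have hv00 : min (min (A 0 0) (A 0 1)) (min (A 1 0) (A 1 1)) * (B 0 0 + B 1 0) ≤
        A 0 0 * B 0 0 + A 0 1 * B 1 0 := by
      nlinarith [mul_le_mul_of_nonneg_right (hmle 0 0) (hBn 0 0),
        mul_le_mul_of_nonneg_right (hmle 0 1) (hBn 1 0)]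
    have hv11 : min (min (A 0 0) (A 0 1)) (min (A 1 0) (A 1 1)) * (B 0 1 + B 1 1) ≤
        A 1 0 * B 0 1 + A 1 1 * B 1 1 := by
      nlinarith [mul_le_mul_of_nonneg_right (hmle 1 0) (hBn 0 1),
        mul_le_mul_of_nonneg_right (hmle 1 1) (hBn 1 1)]
    have hv01 : 0 ≤ A 0 0 * B 0 1 + A 0 1 * B 1 1 := by
      nlinarith [mul_nonneg (hApos 0 0).le (hBn 0 1), mul_nonneg (hApos 0 1).le (hBn 1 1)]
    have hv10 : 0 ≤ A 1 0 * B 0 0 + A 1 1 * B 1 0 := by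
      nlinarith [mul_nonneg (hApos 1 0).le (hBn 0 0), mul_nonneg (hApos 1 1).le (hBn 1 0)]
    have e0 : (A * B * A') 0 0 + (A * B * A') 0 1 =
        (A 0 0 * B 0 0 + A 0 1 * B 1 0) * (A' 0 0 + A' 0 1) +
        (A 0 0 * B 0 1 + A 0 1 * B 1 1) * (A' 1 0 + A' 1 1) := by
      simp [Matrix.mul_apply, Fin.sum_univ_two]
      ring
    have e1 : (A * B * A') 1 0 + (A * B * A') 1 1 =
        (A 1 0 * B 0 0 + A 1 1 * B 1 0) * (A' 0 0 + A' 0 1) +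
        (A 1 0 * B 0 1 + A 1 1 * B 1 1) * (A' 1 0 + A' 1 1) := by
      simp [Matrix.mul_apply, Fin.sum_univ_two]
      ring
    have hD : min (min (A 0 0) (A 0 1)) (min (A 1 0) (A 1 1)) ^ 2 *
          ((A' 0 0 + A' 0 1) * (A' 1 0 + A' 1 1)) * ((B 0 0 + B 1 0) * (B 0 1 + B 1 1)) ≤
        ((A * B * A') 0 0 + (A * B * A') 0 1) * ((A * B * A') 1 0 + (A * B * A') 1 1) := by
      rw [e0, e1]
      exact my_arith2 hv00 hv11 hv01 hv10
        (add_nonneg (hA'n 0 0) (hA'n 0 1)) (add_nonneg (hA'n 1 0) (hA'n 1 1)) hm0 hBc0 hBc1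
    have key : drows (A * B * A') ≤ |A.det| * |B.det| * |A'.det| /
        (min (min (A 0 0) (A 0 1)) (min (A 1 0) (A 1 1)) ^ 2 *
          ((A' 0 0 + A' 0 1) * (A' 1 0 + A' 1 1)) * ((B 0 0 + B 1 0) * (B 0 1 + B 1 1))) := by
      rw [hdr, hdet, abs_mul, abs_mul]
      exact div_le_div_of_nonneg_left (by positivity) (by positivity) hD
    refine key.trans (le_of_eq ?_)
    unfold dcols
    rw [div_mul_div_comm]
    rw [div_eq_div_iff (by positivity) (by positivity)]
    ring

theorem stmt4 (A A' : Matrix (Fin 2) (Fin 2) ℝ)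
    (hA : ColAllowable A) (hA' : ColAllowable A')
    (B : ℕ → Matrix (Fin 2) (Fin 2) ℝ) (hB : ∀ n, ColAllowable (B n))
    (h : Tendsto (fun n => dcols (B n)) atTop (nhds 0)) :
    Tendsto (fun n => dcols (A * B n * A')) atTop (nhds 0) ∧
    ((∀ i j, 0 < A i j) →
      Tendsto (fun n => drows (A * B n * A')) atTop (nhds 0)) := by
  have hnn : ∀ n, ∀ i j, 0 ≤ (A * B n * A') i j := fun n =>
    my_mul_nonneg (my_mul_nonneg hA.1 (hB n).1) hA'.1
  constructor
  · exact my_squeeze _ (fun n => my_dcols_nonneg (hnn n))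
      (fun n => col_key A A' (B n) hA hA' (hB n)) h
  · intro hApos
    refine my_squeeze _ (fun n => ?_) (fun n => row_key A A' (B n) hApos hA' (hB n)) h
    unfold drows
    exact my_dcols_nonneg (fun i j => by simpa [Matrix.transpose_apply] using hnn n j i)
end

section
/- Let (Aₙ)ₙ be a sequence of upper-triangular nonnegative column-allowable 2×2 matrices Aₙ = [[aₙ,bₙ],[0,dₙ]] with dₙ > 0 for all n. If aₖ/dₖ ≥ 1 for every k and ∑ₖ bₖ/dₖ = ∞, then d_columns(A₁A₂⋯Aₙ) → 0 and d_columns(AₙAₙ₋₁⋯A₁) → 0 as n → ∞. -/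
open Matrix Filter

/-!
For `M = [[a, b], [0, d]]` with `a ≥ d > 0` and `b ≥ 0` one has `dcols M = 1 / (1 + b / d)`.
Such matrices form a monoid on which the ratio `b / d` is superadditive, since
`(M * N) 0 1 / (M * N) 1 1 = (a / d) * (b' / d') + b / d` for `N = [[a', b'], [0, d']]`.
Hence in either order the ratio of `A₀ ⋯ Aₙ₋₁` is at least `∑ₖ bₖ / dₖ → ∞`,
and the column distance tends to `0`.
-/

def upperDominant : Submonoid (Matrix (Fin 2) (Fin 2) ℝ) where
  carrier := {M | M 1 0 = 0 ∧ 0 < M 1 1 ∧ M 1 1 ≤ M 0 0 ∧ 0 ≤ M 0 1}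
  one_mem' := by simp
  mul_mem' := by
    rintro M N ⟨hM10, hM11, hMdom, hM01⟩ ⟨hN10, hN11, hNdom, hN01⟩
    simp only [Set.mem_ofPred_eq, Matrix.mul_apply, Fin.sum_univ_two, hM10, hN10]
    exact ⟨by ring, by nlinarith, by nlinarith, by nlinarith⟩

noncomputable def offDiagRatio (M : Matrix (Fin 2) (Fin 2) ℝ) : ℝ :=
  M 0 1 / M 1 1

lemma offDiagRatio_add_le_mul {M N : Matrix (Fin 2) (Fin 2) ℝ}
    (hM : M ∈ upperDominant) (hN : N ∈ upperDominant) :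
    offDiagRatio M + offDiagRatio N ≤ offDiagRatio (M * N) := by
  obtain ⟨hM10, hM11, hMdom, hM01⟩ := hM
  obtain ⟨hN10, hN11, -, hN01⟩ := hN
  simp only [offDiagRatio, Matrix.mul_apply, Fin.sum_univ_two, hM10, zero_mul, zero_add]
  rw [div_add_div _ _ hM11.ne' hN11.ne', div_le_div_iff_of_pos_right (by positivity)]
  nlinarith [mul_le_mul_of_nonneg_right hMdom (mul_nonneg hN01 hM11.le)]

lemma sum_offDiagRatio_le_prod {l : List (Matrix (Fin 2) (Fin 2) ℝ)}
    (hl : ∀ M ∈ l, M ∈ upperDominant) :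
    (l.map offDiagRatio).sum ≤ offDiagRatio l.prod := by
  induction l with
  | nil => simp [offDiagRatio]
  | cons M l ih =>
    simp only [List.forall_mem_cons] at hl
    rw [List.map_cons, List.sum_cons, List.prod_cons]
    exact (add_le_add_right (ih hl.2) _).trans
      (offDiagRatio_add_le_mul hl.1 (upperDominant.list_prod_mem hl.2))

lemma dcols_eq_inv_one_add_offDiagRatio {M : Matrix (Fin 2) (Fin 2) ℝ}
    (hM : M ∈ upperDominant) : dcols M = (1 + offDiagRatio M)⁻¹ := by
  obtain ⟨hM10, hM11, hMdom, hM01⟩ := hM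
  have hM00 : 0 < M 0 0 := hM11.trans_le hMdom
  rw [dcols, offDiagRatio, Matrix.det_fin_two, hM10, mul_zero, sub_zero, add_zero,
    abs_of_pos (by positivity)]
  field_simp
  ring

lemma tendsto_dcols_list_prod {L : ℕ → List (Matrix (Fin 2) (Fin 2) ℝ)}
    (hL : ∀ n, ∀ M ∈ L n, M ∈ upperDominant)
    (hsum : Tendsto (fun n => ((L n).map offDiagRatio).sum) atTop atTop) :
    Tendsto (fun n => dcols (L n).prod) atTop (nhds 0) := by
  simp only [dcols_eq_inv_one_add_offDiagRatio (upperDominant.list_prod_mem (hL _))]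
  have hratio := tendsto_atTop_mono (fun n => sum_offDiagRatio_le_prod (hL n)) hsum
  exact (tendsto_atTop_add_const_left atTop 1 hratio).inv_tendsto_atTop

theorem stmt5 (A : ℕ → Matrix (Fin 2) (Fin 2) ℝ)
    (hA : ∀ n, ColAllowable (A n))
    (htri : ∀ n, A n 1 0 = 0) (hd : ∀ n, 0 < A n 1 1)
    (hratio : ∀ k, 1 ≤ A k 0 0 / A k 1 1)
    (hsum : Tendsto (fun n => ∑ k ∈ Finset.range n, A k 0 1 / A k 1 1)
      atTop atTop) :
    Tendsto (fun n => dcols (((List.range n).map A).prod)) atTop (nhds 0) ∧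
    Tendsto (fun n => dcols (((List.range n).reverse.map A).prod)) atTop (nhds 0) := by
  have hmem k : A k ∈ upperDominant :=
    ⟨htri k, hd k, (one_le_div (hd k)).mp (hratio k), (hA k).1 0 1⟩
  have hmem_range n : ∀ M ∈ (List.range n).map A, M ∈ upperDominant := by
    simp [hmem]
  have hsum_list :
      Tendsto (fun n => (((List.range n).map A).map offDiagRatio).sum) atTop atTop := by
    refine hsum.congr fun n => ?_
    rw [Finset.sum_eq_multiset_sum, Finset.range_val, Multiset.range, Multiset.map_coe,
      Multiset.sum_coe, List.map_map]
    rfl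
  refine ⟨tendsto_dcols_list_prod hmem_range hsum_list, tendsto_dcols_list_prod ?_ ?_⟩
  · simpa [List.map_reverse] using hmem_range
  · simpa [List.map_reverse] using hsum_list
end

section
/- Let (Aₙ)ₙ be a sequence of lower-triangular nonnegative column-allowable 2×2 matrices Aₙ = [[aₙ,0],[cₙ,dₙ]] with aₙ > 0 for all n. If dₖ/aₖ ≥ 1 for every k and ∑ₖ cₖ/aₖ = ∞, then d_columns(A₁A₂⋯Aₙ) → 0 and d_columns(AₙAₙ₋₁⋯A₁) → 0 as n → ∞. -/
/-!
Every partial product `P`, in either order, is lower triangular with `0 < P 0 0 ≤ P 1 1` and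
`P 1 0 ≥ Sₙ · P 0 0`, where `Sₙ = ∑_{k<n} cₖ/aₖ`: multiplying by `Aₖ` on either side scales
`P 0 0` by `aₖ` and, because `dₖ ≥ aₖ`, raises the ratio `P 1 0 / P 0 0` by at least `cₖ/aₖ`.
For such `P`, `dcols P = P 0 0 / (P 0 0 + P 1 0) ≤ 1 / (1 + Sₙ)`, which tends to `0`.
-/

open Matrix Filter

structure LowerTriBound (s : ℝ) (M : Matrix (Fin 2) (Fin 2) ℝ) : Prop where
  upper_right_eq_zero : M 0 1 = 0
  upper_left_pos : 0 < M 0 0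
  upper_left_le_lower_right : M 0 0 ≤ M 1 1
  mul_upper_left_le_lower_left : s * M 0 0 ≤ M 1 0

namespace LowerTriBound

variable {s t : ℝ} {M N : Matrix (Fin 2) (Fin 2) ℝ}

theorem one : LowerTriBound 0 (1 : Matrix (Fin 2) (Fin 2) ℝ) :=
  ⟨rfl, one_pos, le_rfl, by simp⟩

theorem of_lowerTriangular (h01 : M 0 1 = 0) (h00 : 0 < M 0 0) (h11 : M 0 0 ≤ M 1 1) :
    LowerTriBound (M 1 0 / M 0 0) M :=
  ⟨h01, h00, h11, (div_mul_cancel₀ _ h00.ne').le⟩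

theorem lower_right_pos (hM : LowerTriBound s M) : 0 < M 1 1 :=
  hM.upper_left_pos.trans_le hM.upper_left_le_lower_right

theorem mul (hM : LowerTriBound s M) (hN : LowerTriBound t N) (ht : 0 ≤ t) :
    LowerTriBound (s + t) (M * N) := by
  have entry : ∀ i j, (M * N) i j = M i 0 * N 0 j + M i 1 * N 1 j := fun i j => by
    simp [Matrix.mul_apply, Fin.sum_univ_two]
  obtain ⟨hM01, hM00, hM11, hM10⟩ := hM
  obtain ⟨hN01, hN00, hN11, hN10⟩ := hN
  refine ⟨?_, ?_, ?_, ?_⟩ <;>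
    simp only [entry, hM01, hN01, zero_mul, mul_zero, add_zero, zero_add]
  · exact mul_pos hM00 hN00
  · exact mul_le_mul hM11 hN11 hN00.le (hM00.le.trans hM11)
  · have hM10' : s * M 0 0 * N 0 0 ≤ M 1 0 * N 0 0 := mul_le_mul_of_nonneg_right hM10 hN00.le
    have hN10' : M 0 0 * (t * N 0 0) ≤ M 1 1 * N 1 0 :=
      mul_le_mul hM11 hN10 (mul_nonneg ht hN00.le) (hM00.le.trans hM11)
    linarith

theorem list_prod {ι : Type*} (l : List ι) (s : ι → ℝ) (M : ι → Matrix (Fin 2) (Fin 2) ℝ)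
    (hs : ∀ i ∈ l, 0 ≤ s i) (hM : ∀ i ∈ l, LowerTriBound (s i) (M i)) :
    LowerTriBound (l.map s).sum (l.map M).prod := by
  induction l with
  | nil => exact one
  | cons i l ih =>
    rw [List.forall_mem_cons] at hs hM
    simp only [List.map_cons, List.sum_cons, List.prod_cons]
    exact hM.1.mul (ih hs.2 hM.2) (List.sum_nonneg (by simpa using hs.2))

theorem dcols_eq (hM : LowerTriBound s M) : dcols M = M 0 0 / (M 0 0 + M 1 0) := by
  rw [dcols, det_fin_two, hM.upper_right_eq_zero, zero_mul, sub_zero, zero_add,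
    abs_of_pos (mul_pos hM.upper_left_pos hM.lower_right_pos),
    mul_div_mul_right _ _ hM.lower_right_pos.ne']

theorem one_add_mul_le (hM : LowerTriBound s M) : (1 + s) * M 0 0 ≤ M 0 0 + M 1 0 := by
  linarith [hM.mul_upper_left_le_lower_left]

theorem upper_left_add_lower_left_pos (hM : LowerTriBound s M) (hs : 0 ≤ s) :
    0 < M 0 0 + M 1 0 :=
  (mul_pos (by linarith) hM.upper_left_pos).trans_le hM.one_add_mul_le

theorem dcols_nonneg (hM : LowerTriBound s M) (hs : 0 ≤ s) : 0 ≤ dcols M := by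
  rw [hM.dcols_eq]
  exact div_nonneg hM.upper_left_pos.le (hM.upper_left_add_lower_left_pos hs).le

theorem dcols_le (hM : LowerTriBound s M) (hs : 0 ≤ s) : dcols M ≤ (1 + s)⁻¹ := by
  rw [hM.dcols_eq, div_le_iff₀ (hM.upper_left_add_lower_left_pos hs),
    le_inv_mul_iff₀ (by linarith)]
  exact hM.one_add_mul_le

end LowerTriBound

theorem tendsto_dcols_zero_of_lowerTriBound {P : ℕ → Matrix (Fin 2) (Fin 2) ℝ} {s : ℕ → ℝ}
    (hP : ∀ n, LowerTriBound (s n) (P n)) (hs0 : ∀ n, 0 ≤ s n) (hs : Tendsto s atTop atTop) :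
    Tendsto (fun n => dcols (P n)) atTop (nhds 0) :=
  squeeze_zero (fun n => (hP n).dcols_nonneg (hs0 n)) (fun n => (hP n).dcols_le (hs0 n))
    (tendsto_atTop_add_const_left atTop 1 hs).inv_tendsto_atTop

theorem stmt6 (A : ℕ → Matrix (Fin 2) (Fin 2) ℝ)
    (hA : ∀ n, ColAllowable (A n))
    (htri : ∀ n, A n 0 1 = 0) (ha : ∀ n, 0 < A n 0 0)
    (hratio : ∀ k, 1 ≤ A k 1 1 / A k 0 0)
    (hsum : Tendsto (fun n => ∑ k ∈ Finset.range n, A k 1 0 / A k 0 0)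
      atTop atTop) :
    Tendsto (fun n => dcols (((List.range n).map A).prod)) atTop (nhds 0) ∧
    Tendsto (fun n => dcols (((List.range n).reverse.map A).prod)) atTop (nhds 0) := by
  set r : ℕ → ℝ := fun k => A k 1 0 / A k 0 0
  have hr : ∀ k, 0 ≤ r k := fun k => div_nonneg ((hA k).1 1 0) (ha k).le
  have hAr : ∀ k, LowerTriBound (r k) (A k) := fun k =>
    .of_lowerTriangular (htri k) (ha k) ((one_le_div (ha k)).mp (hratio k))
  have hsum_eq : ∀ n, ((List.range n).map r).sum = ∑ k ∈ Finset.range n, r k := fun n => rfl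
  have hS0 : ∀ n, 0 ≤ ∑ k ∈ Finset.range n, r k := fun n => Finset.sum_nonneg fun k _ => hr k
  constructor
  · refine tendsto_dcols_zero_of_lowerTriBound (fun n => ?_) hS0 hsum
    simpa only [hsum_eq] using
      LowerTriBound.list_prod (List.range n) r A (fun k _ => hr k) (fun k _ => hAr k)
  · refine tendsto_dcols_zero_of_lowerTriBound (fun n => ?_) hS0 hsum
    simpa only [List.map_reverse, List.sum_reverse, hsum_eq] using
      LowerTriBound.list_prod (List.range n).reverse r A (fun k _ => hr k) (fun k _ => hAr k)
end

section
/- Let A be a 2×2 real matrix with nonnegative entries and det A ≥ 0, and let V_A be a nonzero nonnegative eigenvector of A associated with the maximal eigenvalue of A (its spectral radius). Then for every nonnegative vector X ∈ ℝ² there exist reals s ≥ 0 and t ≥ 0 with AX = sX + tV_A; consequently every cone of nonnegative vectors containing V_A is stable under left-multiplication by A. -/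
open Matrix

theorem stmt7 (A : Matrix (Fin 2) (Fin 2) ℝ) (hA : ∀ i j, 0 ≤ A i j)
    (hdet : 0 ≤ A.det) (ρ : ℝ) (V : Fin 2 → ℝ)
    (hV0 : V ≠ 0) (hVnn : ∀ i, 0 ≤ V i)
    (heig : A.mulVec V = ρ • V)
    (hmax : ∀ μ ∈ spectrum ℝ A, μ ≤ ρ) :
    (∀ X : Fin 2 → ℝ, (∀ i, 0 ≤ X i) →
      ∃ s t : ℝ, 0 ≤ s ∧ 0 ≤ t ∧ A.mulVec X = s • X + t • V) ∧
    (∀ C : Set (Fin 2 → ℝ),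
      (∀ X ∈ C, ∀ i, 0 ≤ X i) →
      (∀ X ∈ C, ∀ Y ∈ C, X + Y ∈ C) →
      (∀ X ∈ C, ∀ r : ℝ, 0 ≤ r → r • X ∈ C) →
      V ∈ C → ∀ X ∈ C, A.mulVec X ∈ C) := by
  have e1 : A 0 0 * V 0 + A 0 1 * V 1 = ρ * V 0 := by
    have := congrFun heig 0
    simpa [Matrix.mulVec, dotProduct, Fin.sum_univ_two] using this
  have e2 : A 1 0 * V 0 + A 1 1 * V 1 = ρ * V 1 := by
    have := congrFun heig 1
    simpa [Matrix.mulVec, dotProduct, Fin.sum_univ_two] using this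
  have hVpos : 0 < V 0 ∨ 0 < V 1 := by
    by_contra h
    push_neg at h
    apply hV0
    funext i
    fin_cases i
    · exact le_antisymm h.1 (hVnn 0)
    · exact le_antisymm h.2 (hVnn 1)
  -- characteristic equation at ρ
  have key0 : ((A 0 0 - ρ) * (A 1 1 - ρ) - A 0 1 * A 1 0) * V 0 = 0 := by
    linear_combination (A 1 1 - ρ) * e1 - A 0 1 * e2
  have key1 : ((A 0 0 - ρ) * (A 1 1 - ρ) - A 0 1 * A 1 0) * V 1 = 0 := by
    linear_combination (A 0 0 - ρ) * e2 - A 1 0 * e1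
  have hchar : (A 0 0 - ρ) * (A 1 1 - ρ) - A 0 1 * A 1 0 = 0 := by
    rcases hVpos with h | h
    · exact (mul_eq_zero.mp key0).resolve_right h.ne'
    · exact (mul_eq_zero.mp key1).resolve_right h.ne'
  -- the other eigenvalue is in the spectrum
  have hlspec : (A 0 0 + A 1 1 - ρ) ∈ spectrum ℝ A := by
    rw [spectrum.mem_iff]
    intro hunit
    rw [Matrix.isUnit_iff_isUnit_det] at hunit
    have hdet0 : (algebraMap ℝ (Matrix (Fin 2) (Fin 2) ℝ) (A 0 0 + A 1 1 - ρ) - A).det = 0 := by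
      simp only [Matrix.det_fin_two, Matrix.sub_apply, Matrix.algebraMap_matrix_apply]
      norm_num
      linear_combination hchar
    rw [hdet0] at hunit
    exact not_isUnit_zero hunit
  have hlρ : A 0 0 + A 1 1 - ρ ≤ ρ := hmax _ hlspec
  have hdet2 : 0 ≤ A 0 0 * A 1 1 - A 0 1 * A 1 0 := by
    rw [Matrix.det_fin_two] at hdet; linarith
  have hρa : A 0 0 ≤ ρ := by
    nlinarith [mul_nonneg (hA 0 1) (hA 1 0), sq_nonneg (A 0 0 - ρ)]
  have hρd : A 1 1 ≤ ρ := by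
    nlinarith [mul_nonneg (hA 0 1) (hA 1 0), sq_nonneg (A 1 1 - ρ)]
  have hρ0 : 0 ≤ ρ := le_trans (hA 0 0) hρa
  have hl0 : 0 ≤ A 0 0 + A 1 1 - ρ := by
    rcases eq_or_lt_of_le hρ0 with h | h
    · have ha0 : A 0 0 = 0 := le_antisymm (h ▸ hρa) (hA 0 0)
      have hd0 : A 1 1 = 0 := le_antisymm (h ▸ hρd) (hA 1 1)
      rw [ha0, hd0, ← h]; norm_num
    · have hρl : ρ * (A 0 0 + A 1 1 - ρ) = A 0 0 * A 1 1 - A 0 1 * A 1 0 := by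
        linear_combination -hchar
      nlinarith
  have main : ∀ X : Fin 2 → ℝ, (∀ i, 0 ≤ X i) →
      ∃ s t : ℝ, 0 ≤ s ∧ 0 ≤ t ∧ A.mulVec X = s • X + t • V := by
    intro X hX
    have hw0 : 0 ≤ (ρ - A 1 1) * X 0 + A 0 1 * X 1 :=
      add_nonneg (mul_nonneg (by linarith) (hX 0)) (mul_nonneg (hA 0 1) (hX 1))
    have hw1 : 0 ≤ A 1 0 * X 0 + (ρ - A 0 0) * X 1 :=
      add_nonneg (mul_nonneg (hA 1 0) (hX 0)) (mul_nonneg (by linarith) (hX 1))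
    have hcross : ((ρ - A 1 1) * X 0 + A 0 1 * X 1) * V 1
        = (A 1 0 * X 0 + (ρ - A 0 0) * X 1) * V 0 := by
      linear_combination X 1 * e1 - X 0 * e2
    rcases hVpos with hv | hv
    · refine ⟨A 0 0 + A 1 1 - ρ, ((ρ - A 1 1) * X 0 + A 0 1 * X 1) / V 0, hl0,
        div_nonneg hw0 hv.le, ?_⟩
      funext i
      fin_cases i
      · simp only [Matrix.mulVec, dotProduct, Fin.sum_univ_two, Pi.add_apply,
          Pi.smul_apply, smul_eq_mul, Fin.mk_zero, Fin.mk_one, Fin.isValue]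
        rw [div_mul_cancel₀ _ hv.ne']
        ring
      · simp only [Matrix.mulVec, dotProduct, Fin.sum_univ_two, Pi.add_apply,
          Pi.smul_apply, smul_eq_mul, Fin.mk_zero, Fin.mk_one, Fin.isValue]
        rw [div_mul_eq_mul_div, hcross, mul_div_assoc, div_self hv.ne', mul_one]
        ring
    · refine ⟨A 0 0 + A 1 1 - ρ, (A 1 0 * X 0 + (ρ - A 0 0) * X 1) / V 1, hl0,
        div_nonneg hw1 hv.le, ?_⟩
      funext i
      fin_cases i
      · simp only [Matrix.mulVec, dotProduct, Fin.sum_univ_two, Pi.add_apply,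
          Pi.smul_apply, smul_eq_mul, Fin.mk_zero, Fin.mk_one, Fin.isValue]
        rw [div_mul_eq_mul_div, ← hcross, mul_div_assoc, div_self hv.ne', mul_one]
        ring
      · simp only [Matrix.mulVec, dotProduct, Fin.sum_univ_two, Pi.add_apply,
          Pi.smul_apply, smul_eq_mul, Fin.mk_zero, Fin.mk_one, Fin.isValue]
        rw [div_mul_cancel₀ _ hv.ne']
        ring
  refine ⟨main, ?_⟩
  intro C hCnn hCadd hCsmul hVC X hXC
  obtain ⟨s, t, hs, ht, heq⟩ := main X (hCnn X hXC)
  rw [heq]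
  exact hCadd _ (hCsmul X hXC s hs) _ (hCsmul V hVC t ht)
end

section
/- Let m and M be respectively the infimum and the supremum of n(Pₙ(ω)V) over all n ∈ ℕ and ω ∈ S^ℕ, and let M_V be the 2×2 matrix with columns (m, 1−m) and (M, 1−M). If for every ω ∈ S^ℕ one has d_columns(Pₙ(ω)M_V) → 0 as n → ∞, then the sequence of maps ω ↦ N(Pₙ(ω)V) converges uniformly on S^ℕ. -/
open Matrix Filter

/-- `n(X) = x₁/(x₁+x₂)`. -/
noncomputable def nv (X : Fin 2 → ℝ) : ℝ := X 0 / (X 0 + X 1)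

/-- The normalized vector `N(X)`. -/
noncomputable def Nv (X : Fin 2 → ℝ) : Fin 2 → ℝ := ![nv X, 1 - nv X]

/-- `Pₙ(ω) = M_{ω₁} M_{ω₂} ⋯ M_{ωₙ}`. -/
def Pprod {s : ℕ} (M : Fin s → Matrix (Fin 2) (Fin 2) ℝ) (ω : ℕ → Fin s) (n : ℕ) :
    Matrix (Fin 2) (Fin 2) ℝ :=
  ((List.range n).map (fun i => M (ω i))).prod

/-! For a nonnegative column-allowable `A`, `t ↦ n(A (t, 1 - t))` is a Möbius map on `[0, 1]`,
monotone or antitone according to the sign of `det A`. It therefore maps `[m, M]` into the interval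
between the images of `m` and `M`, whose length is `d_columns(A M_V)`. For `n > q` we can write
`Pₙ(ω)V = P_q(ω)W` where `W` is a later product applied to `V`, so `n(W) ∈ [m, M]`. Hence
`n(Pₙ(ω)V)` oscillates by at most `d_columns(P_q(ω) M_V)` after time `q`. This bound
depends only on `ω₁, …, ω_q`, so it is continuous in `ω`. By compactness of `S^ℕ`, finitely
many of the open sets where it is `< ε` cover `S^ℕ`, which gives a uniform Cauchy estimate. -/

open Topology

theorem nv_smul {c : ℝ} (hc : c ≠ 0) (X : Fin 2 → ℝ) : nv (c • X) = nv X := by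
  simp only [nv, Pi.smul_apply, smul_eq_mul, ← mul_add]
  exact mul_div_mul_left _ _ hc

theorem nv_mulVec_Nv (A : Matrix (Fin 2) (Fin 2) ℝ) {X : Fin 2 → ℝ} (hX : X 0 + X 1 ≠ 0) :
    nv (A *ᵥ Nv X) = nv (A *ᵥ X) := by
  have hXN : X = (X 0 + X 1) • Nv X := by
    ext i; fin_cases i
    · simp [Nv, nv]; field_simp
    · simp [Nv, nv]; field_simp; ring
  conv_rhs => rw [hXN, Matrix.mulVec_smul, nv_smul hX]

theorem nv_mem_Icc {X : Fin 2 → ℝ} (hX : 0 ≤ X) (hXs : 0 < X 0 + X 1) :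
    nv X ∈ Set.Icc 0 1 :=
  ⟨div_nonneg (hX 0) hXs.le, (div_le_one hXs).2 (le_add_of_nonneg_right (hX 1))⟩

theorem dist_Nv (X Y : Fin 2 → ℝ) : dist (Nv X) (Nv Y) = dist (nv X) (nv Y) := by
  refine le_antisymm ((dist_pi_le_iff dist_nonneg).2 fun i => ?_)
    (dist_le_pi_dist (Nv X) (Nv Y) 0)
  fin_cases i
  · rfl
  · simp only [Nv, Fin.mk_one, Matrix.cons_val_one, Matrix.cons_val_zero, Real.dist_eq]
    rw [sub_sub_sub_cancel_left, abs_sub_comm]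

theorem nv_mulVec_sub_nv_mulVec (A : Matrix (Fin 2) (Fin 2) ℝ) {X Y : Fin 2 → ℝ}
    (hX : (A *ᵥ X) 0 + (A *ᵥ X) 1 ≠ 0) (hY : (A *ᵥ Y) 0 + (A *ᵥ Y) 1 ≠ 0) :
    nv (A *ᵥ X) - nv (A *ᵥ Y) = A.det * (X 0 * Y 1 - X 1 * Y 0) /
      (((A *ᵥ X) 0 + (A *ᵥ X) 1) * ((A *ᵥ Y) 0 + (A *ᵥ Y) 1)) := by
  rw [nv, nv, div_sub_div _ _ hX hY]
  congr 1
  simp only [Matrix.mulVec, dotProduct, Fin.sum_univ_two, Matrix.det_fin_two]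
  ring

theorem dcols_eq_dist_nv (B : Matrix (Fin 2) (Fin 2) ℝ) (h0 : 0 < B 0 0 + B 1 0)
    (h1 : 0 < B 0 1 + B 1 1) : dcols B = dist (nv (Bᵀ 0)) (nv (Bᵀ 1)) := by
  simp only [dcols, Real.dist_eq, nv, Matrix.transpose_apply]
  rw [div_sub_div _ _ h0.ne' h1.ne', abs_div, abs_of_pos (mul_pos h0 h1), Matrix.det_fin_two]
  congr 2
  ring

theorem mem_uIcc_of_mul_sub_nonpos {x a b : ℝ} (h : (x - a) * (x - b) ≤ 0) :
    x ∈ Set.uIcc a b := by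
  rcases mul_nonpos_iff.1 h with ⟨hxa, hxb⟩ | ⟨hxa, hxb⟩
  · exact Set.Icc_subset_uIcc ⟨by linarith, by linarith⟩
  · exact Set.Icc_subset_uIcc' ⟨by linarith, by linarith⟩

namespace ColAllowable

variable {A B : Matrix (Fin 2) (Fin 2) ℝ}

theorem one : ColAllowable 1 := by
  refine ⟨fun i j => ?_, by norm_num, by norm_num⟩
  fin_cases i <;> fin_cases j <;> norm_num

theorem mulVec_nonneg (hA : ColAllowable A) {X : Fin 2 → ℝ} (hX : 0 ≤ X) : 0 ≤ A *ᵥ X :=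
  fun i => by
    simp only [Pi.zero_apply, Matrix.mulVec, dotProduct, Fin.sum_univ_two]
    exact add_nonneg (mul_nonneg (hA.1 i 0) (hX 0)) (mul_nonneg (hA.1 i 1) (hX 1))

theorem sum_mulVec_pos (hA : ColAllowable A) {X : Fin 2 → ℝ} (hX : 0 ≤ X)
    (hXs : 0 < X 0 + X 1) : 0 < (A *ᵥ X) 0 + (A *ᵥ X) 1 := by
  obtain ⟨-, h0, h1⟩ := hA
  set c₀ := A 0 0 + A 1 0
  set c₁ := A 0 1 + A 1 1
  have hX0 : 0 ≤ X 0 := hX 0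
  have hX1 : 0 ≤ X 1 := hX 1
  calc 0 < min c₀ c₁ * (X 0 + X 1) := mul_pos (lt_min h0 h1) hXs
    _ ≤ c₀ * X 0 + c₁ * X 1 := by nlinarith [min_le_left c₀ c₁, min_le_right c₀ c₁]
    _ = (A *ᵥ X) 0 + (A *ᵥ X) 1 := by
      simp only [c₀, c₁, Matrix.mulVec, dotProduct, Fin.sum_univ_two]; ring

theorem sum_mulVec_segment_pos (hA : ColAllowable A) {t : ℝ} (ht : t ∈ Set.Icc 0 1) :
    0 < (A *ᵥ ![t, 1 - t]) 0 + (A *ᵥ ![t, 1 - t]) 1 :=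
  hA.sum_mulVec_pos (fun i => by fin_cases i <;> simp [ht.1, ht.2]) (by simp)

theorem mul (hA : ColAllowable A) (hB : ColAllowable B) : ColAllowable (A * B) := by
  have hcol : ∀ j, 0 ≤ Bᵀ j := fun j i => hB.1 i j
  refine ⟨fun i j => hA.mulVec_nonneg (hcol j) i, ?_, ?_⟩
  · exact hA.sum_mulVec_pos (hcol 0) hB.2.1
  · exact hA.sum_mulVec_pos (hcol 1) hB.2.2

theorem nv_mulVec_mem_uIcc (hA : ColAllowable A) {m Ms t : ℝ} (hm : 0 ≤ m) (hMs : Ms ≤ 1)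
    (ht : t ∈ Set.Icc m Ms) :
    nv (A *ᵥ ![t, 1 - t]) ∈ Set.uIcc (nv (A *ᵥ ![m, 1 - m])) (nv (A *ᵥ ![Ms, 1 - Ms])) := by
  have hσ := fun r (hr : r ∈ Set.Icc (0 : ℝ) 1) => hA.sum_mulVec_segment_pos hr
  have hσt := hσ t ⟨hm.trans ht.1, ht.2.trans hMs⟩
  have hσm := hσ m ⟨hm, ht.1.trans (ht.2.trans hMs)⟩
  have hσM := hσ Ms ⟨hm.trans (ht.1.trans ht.2), hMs⟩
  apply mem_uIcc_of_mul_sub_nonpos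
  rw [nv_mulVec_sub_nv_mulVec A hσt.ne' hσm.ne', nv_mulVec_sub_nv_mulVec A hσt.ne' hσM.ne',
    div_mul_div_comm]
  refine div_nonpos_of_nonpos_of_nonneg ?_ (by positivity)
  simp only [Matrix.cons_val_zero, Matrix.cons_val_one]
  nlinarith [sq_nonneg A.det,
    mul_nonpos_of_nonneg_of_nonpos (sub_nonneg.2 ht.1) (sub_nonpos.2 ht.2)]

theorem dist_nv_mulVec_le_dcols (hA : ColAllowable A) {m Ms : ℝ} (hm : 0 ≤ m) (hMs : Ms ≤ 1)
    {W W' : Fin 2 → ℝ} (hW : W 0 + W 1 ≠ 0) (hW' : W' 0 + W' 1 ≠ 0)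
    (hWI : nv W ∈ Set.Icc m Ms) (hWI' : nv W' ∈ Set.Icc m Ms) :
    dist (nv (A *ᵥ W)) (nv (A *ᵥ W')) ≤ dcols (A * !![m, Ms; 1 - m, 1 - Ms]) := by
  have hm1 : m ≤ 1 := hWI.1.trans (hWI.2.trans hMs)
  have hMs0 : 0 ≤ Ms := hm.trans (hWI.1.trans hWI.2)
  have hcol0 : (A * !![m, Ms; 1 - m, 1 - Ms])ᵀ 0 = A *ᵥ ![m, 1 - m] := by
    ext i; fin_cases i <;> simp [Matrix.mul_apply, Matrix.mulVec, dotProduct]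
  have hcol1 : (A * !![m, Ms; 1 - m, 1 - Ms])ᵀ 1 = A *ᵥ ![Ms, 1 - Ms] := by
    ext i; fin_cases i <;> simp [Matrix.mul_apply, Matrix.mulVec, dotProduct]
  have hσm := hA.sum_mulVec_segment_pos ⟨hm, hm1⟩
  have hσM := hA.sum_mulVec_segment_pos ⟨hMs0, hMs⟩
  rw [← hcol0] at hσm
  rw [← hcol1] at hσM
  rw [dcols_eq_dist_nv _ hσm hσM, hcol0, hcol1, ← nv_mulVec_Nv A hW, ← nv_mulVec_Nv A hW']
  exact Real.dist_le_of_mem_uIcc (hA.nv_mulVec_mem_uIcc hm hMs hWI)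
    (hA.nv_mulVec_mem_uIcc hm hMs hWI')

end ColAllowable

section Pprod

variable {s : ℕ} (M : Fin s → Matrix (Fin 2) (Fin 2) ℝ)

theorem Pprod_add (ω : ℕ → Fin s) (p k : ℕ) :
    Pprod M ω (p + k) = Pprod M ω p * Pprod M (fun i => ω (p + i)) k := by
  simp only [Pprod, List.range_add, List.map_append, List.prod_append, List.map_map]
  rfl

theorem colAllowable_Pprod (hM : ∀ k, ColAllowable (M k)) (ω : ℕ → Fin s) (n : ℕ) :
    ColAllowable (Pprod M ω n) :=
  List.prod_induction _ (fun _ _ => ColAllowable.mul) ColAllowable.one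
    (by simp only [List.mem_map]; rintro _ ⟨i, -, rfl⟩; exact hM _)

theorem isLocallyConstant_Pprod (n : ℕ) :
    IsLocallyConstant fun ω : ℕ → Fin s => Pprod M ω n := by
  refine (IsLocallyConstant.iff_eventually_eq _).2 fun ω => ?_
  have hcyl : ∀ᶠ ω' in 𝓝 ω, ∀ i ∈ Set.Iio n, ω' i = ω i :=
    (Filter.eventually_all_finite (Set.finite_Iio n)).2 fun i _ =>
      tendsto_pure.1 (by simpa only [nhds_discrete] using (continuous_apply i).tendsto ω)
  filter_upwards [hcyl] with ω' hω'
  exact congrArg List.prod (List.map_congr_left fun i hi => by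
    rw [hω' i (List.mem_range.1 hi)])

end Pprod

theorem uniformCauchySeqOn_of_dist_le {X E : Type*} [TopologicalSpace X] [CompactSpace X]
    [PseudoMetricSpace E] {f : ℕ → X → E} {g : ℕ → X → ℝ}
    (hg : ∀ q, Continuous (g q))
    (hg0 : ∀ x, Tendsto (g · x) atTop (𝓝 0))
    (hfg : ∀ q n n' x, q < n → q < n' → dist (f n x) (f n' x) ≤ g q x) :
    UniformCauchySeqOn f atTop Set.univ := by
  refine Metric.uniformCauchySeqOn_iff.2 fun ε hε => ?_
  have hcover : Set.univ ⊆ ⋃ q, {x | g q x < ε} := fun x _ =>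
    Set.mem_iUnion.2 ((hg0 x).eventually (gt_mem_nhds hε)).exists
  obtain ⟨t, ht⟩ := isCompact_univ.elim_finite_subcover _
    (fun q => isOpen_lt (hg q) continuous_const) hcover
  refine ⟨t.sup id + 1, fun n hn n' hn' x _ => ?_⟩
  obtain ⟨q, hqt, hq⟩ := Set.mem_iUnion₂.1 (ht (Set.mem_univ x))
  have hqN : q ≤ t.sup id := t.le_sup (f := id) hqt
  exact (hfg q n n' x (by omega) (by omega)).trans_lt hq

theorem UniformCauchySeqOn.exists_tendstoUniformly {X E : Type*} [UniformSpace E]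
    [CompleteSpace E] {f : ℕ → X → E} (hf : UniformCauchySeqOn f atTop Set.univ) :
    ∃ F, TendstoUniformly f F atTop := by
  choose F hF using fun x => cauchySeq_tendsto_of_complete (hf.cauchySeq (Set.mem_univ x))
  exact ⟨F, tendstoUniformlyOn_univ.1 (hf.tendstoUniformlyOn_of_tendsto fun x _ => hF x)⟩

theorem stmt8 (s : ℕ) (M : Fin s → Matrix (Fin 2) (Fin 2) ℝ)
    (hM : ∀ k, ColAllowable (M k))
    (V : Fin 2 → ℝ) (hV : 0 < V 0 ∧ 0 < V 1)
    (m Msup : ℝ)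
    (hm : IsGLB {x | ∃ n, 1 ≤ n ∧ ∃ ω : ℕ → Fin s,
      x = nv ((Pprod M ω n).mulVec V)} m)
    (hMsup : IsLUB {x | ∃ n, 1 ≤ n ∧ ∃ ω : ℕ → Fin s,
      x = nv ((Pprod M ω n).mulVec V)} Msup)
    (MV : Matrix (Fin 2) (Fin 2) ℝ)
    (hMV : MV = !![m, Msup; 1 - m, 1 - Msup])
    (h : ∀ ω : ℕ → Fin s,
      Tendsto (fun n => dcols (Pprod M ω n * MV)) atTop (nhds 0)) :
    ∃ F : (ℕ → Fin s) → (Fin 2 → ℝ),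
      TendstoUniformly (fun n ω => Nv ((Pprod M ω n).mulVec V)) F atTop := by
  have hV0 : 0 ≤ V := fun i => by fin_cases i <;> simp [hV.1.le, hV.2.le]
  have hPV : ∀ ω n,
      0 ≤ Pprod M ω n *ᵥ V ∧ 0 < (Pprod M ω n *ᵥ V) 0 + (Pprod M ω n *ᵥ V) 1 :=
    fun ω n => ⟨(colAllowable_Pprod M hM ω n).mulVec_nonneg hV0,
      (colAllowable_Pprod M hM ω n).sum_mulVec_pos hV0 (add_pos hV.1 hV.2)⟩
  have hS01 : ∀ ω n, nv (Pprod M ω n *ᵥ V) ∈ Set.Icc 0 1 := fun ω n =>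
    nv_mem_Icc (hPV ω n).1 (hPV ω n).2
  have hm0 : 0 ≤ m := hm.2 <| by rintro _ ⟨n, -, ω, rfl⟩; exact (hS01 ω n).1
  have hM1 : Msup ≤ 1 := hMsup.2 <| by rintro _ ⟨n, -, ω, rfl⟩; exact (hS01 ω n).2
  have hsplit : ∀ ω q n, q < n → ∃ W : Fin 2 → ℝ,
      Pprod M ω n *ᵥ V = Pprod M ω q *ᵥ W ∧ W 0 + W 1 ≠ 0 ∧
        nv W ∈ Set.Icc m Msup := by
    intro ω q n hqn
    obtain ⟨k, rfl⟩ := Nat.exists_eq_add_of_lt hqn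
    refine ⟨Pprod M (fun i => ω (q + i)) (k + 1) *ᵥ V, ?_, (hPV _ _).2.ne',
      hm.1 ⟨k + 1, le_add_self, _, rfl⟩, hMsup.1 ⟨k + 1, le_add_self, _, rfl⟩⟩
    rw [add_assoc, Pprod_add, Matrix.mulVec_mulVec]
  have hcont : ∀ q, Continuous fun ω => dcols (Pprod M ω q * MV) := fun q =>
    ((isLocallyConstant_Pprod M q).comp fun P => dcols (P * MV)).continuous
  refine (uniformCauchySeqOn_of_dist_le hcont h ?_).exists_tendstoUniformly
  intro q n n' ω hn hn'
  obtain ⟨W, hnW, hW, hWI⟩ := hsplit ω q n hn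
  obtain ⟨W', hnW', hW', hWI'⟩ := hsplit ω q n' hn'
  rw [dist_Nv, hnW, hnW', hMV]
  exact (colAllowable_Pprod M hM ω q).dist_nv_mulVec_le_dcols hm0 hM1 hW hW' hWI hWI'
end

section
/- Suppose M satisfies: every matrix [[a,b],[0,d]] ∈ M has a ≥ d; every matrix [[a,0],[c,d]] ∈ M has a ≤ d; whenever [[a,b],[c,0]] ∈ M and [[0,b'],[c',d']] ∈ M one has bc' ≥ b'c; and no matrix in M has the form [[a,0],[0,d]] or [[0,b],[c,0]]. Then for every vector V = (v₁,v₂) with v₁, v₂ > 0, the sequence of maps ω ↦ N(Pₙ(ω)V) converges uniformly on S^ℕ. -/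
open Matrix Filter

set_option maxHeartbeats 1600000

namespace S9

def Ecol (P : Matrix (Fin 2) (Fin 2) ℝ) : ℝ := P 0 0 + P 1 0
def Gcol (P : Matrix (Fin 2) (Fin 2) ℝ) : ℝ := P 0 1 + P 1 1
def det2 (P : Matrix (Fin 2) (Fin 2) ℝ) : ℝ := P 0 0 * P 1 1 - P 0 1 * P 1 0

lemma mul_apply₂ (P Q : Matrix (Fin 2) (Fin 2) ℝ) (i j : Fin 2) :
    (P * Q) i j = P i 0 * Q 0 j + P i 1 * Q 1 j := by
  simp [Matrix.mul_apply, Fin.sum_univ_two]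

lemma Ecol_mul (P Q : Matrix (Fin 2) (Fin 2) ℝ) :
    Ecol (P * Q) = Q 0 0 * Ecol P + Q 1 0 * Gcol P := by
  simp [Ecol, Gcol, mul_apply₂]; ring

lemma Gcol_mul (P Q : Matrix (Fin 2) (Fin 2) ℝ) :
    Gcol (P * Q) = Q 0 1 * Ecol P + Q 1 1 * Gcol P := by
  simp [Ecol, Gcol, mul_apply₂]; ring

lemma det2_mul (P Q : Matrix (Fin 2) (Fin 2) ℝ) :
    det2 (P * Q) = det2 P * det2 Q := by
  simp [det2, mul_apply₂]; ring

lemma pos_comb {a c E G : ℝ} (ha : 0 ≤ a) (hc : 0 ≤ c) (hac : 0 < a + c)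
    (hE : 0 < E) (hG : 0 < G) : 0 < a * E + c * G := by
  rcases ha.eq_or_lt with h | h
  · have : 0 < c := by linarith
    nlinarith
  · nlinarith [mul_nonneg hc hG.le]

lemma colAllowable_mul {P Q : Matrix (Fin 2) (Fin 2) ℝ}
    (hP : ColAllowable P) (hQ : ColAllowable Q) : ColAllowable (P * Q) := by
  obtain ⟨hP0, hPE, hPG⟩ := hP
  obtain ⟨hQ0, hQE, hQG⟩ := hQ
  refine ⟨fun i j => ?_, ?_, ?_⟩
  · rw [mul_apply₂]
    have := hP0 i 0; have := hP0 i 1; have := hQ0 0 j; have := hQ0 1 j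
    positivity
  · have h := pos_comb (hQ0 0 0) (hQ0 1 0) hQE hPE hPG
    have e := Ecol_mul P Q
    simp only [Ecol, Gcol] at e h ⊢
    linarith
  · have h := pos_comb (hQ0 0 1) (hQ0 1 1) hQG hPE hPG
    have e := Gcol_mul P Q
    simp only [Ecol, Gcol] at e h ⊢
    linarith

lemma core (α κ K a b c d E G W : ℝ)
    (ha : 0 ≤ a) (hb : 0 ≤ b) (hc : 0 ≤ c) (hd : 0 ≤ d)
    (hac : 0 < a + c) (hbd : 0 < b + d)
    (hE : 0 < E) (hG : 0 < G)
    (hW1 : 1 ≤ W) (hWE : α * G ≤ W * E) (hWG : E ≤ W * G)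
    (hαp : 0 < α) (hκ0 : 0 < κ) (hκ2 : κ ≤ 1/2) (hK : 1 ≤ K)
    (h1 : c = 0 → d ≤ a) (h2 : b = 0 → a ≤ d)
    (h4 : ¬(b = 0 ∧ c = 0)) (h5 : ¬(a = 0 ∧ d = 0))
    (hα1 : a = 0 → α * b ≤ c) (hα2 : d = 0 → c ≤ α * b)
    (hκU : a ≠ 0 → d ≠ 0 → c = 0 → 2*κ*d ≤ α*b)
    (hκL : b = 0 → a ≠ 0 → 2*κ*a ≤ c)
    (hκA : a = 0 → 2*κ*b ≤ d)
    (hκD : d = 0 → a ≠ 0 → 2*κ*c ≤ α*a)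
    (hκP : 0 < a → 0 < b → 0 < c → 0 < d → κ*(a*d + b*c) ≤ min (a*d) (b*c))
    (g1 : a ≠ 0 → α*b ≤ K*a) (g2 : c ≠ 0 → α*d ≤ K*c)
    (g3 : b ≠ 0 → a ≤ K*b) (g4 : d ≠ 0 → c ≤ K*d) :
    α*(b*E + d*G) ≤ (W+K)*(a*E + c*G) ∧
    (a*E + c*G) ≤ (W+K)*(b*E + d*G) ∧
    κ*((a*E + c*G)*(b*E + d*G)) + W*(|a*d - b*c| *(E*G)) ≤
      W*((a*E + c*G)*(b*E + d*G)) := by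
  have hWpos : (0:ℝ) < W := lt_of_lt_of_le one_pos hW1
  by_cases hA : a = 0
  · -- type A : a = 0, c > 0, d > 0
    subst hA
    have hc' : 0 < c := by linarith
    have hd' : 0 < d := (hd).lt_of_ne (fun h => h5 ⟨rfl, h.symm⟩)
    have habs : |0*d - b*c| = b*c := by
      rw [zero_mul, zero_sub, abs_neg, abs_of_nonneg (mul_nonneg hb hc)]
    refine ⟨?_, ?_, ?_⟩
    · nlinarith [mul_le_mul_of_nonneg_right (hα1 rfl) hE.le,
        mul_le_mul_of_nonneg_left hWG hc,
        mul_le_mul_of_nonneg_right (g2 hc'.ne') hG.le]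
    · nlinarith [mul_le_mul_of_nonneg_right (g4 hd'.ne') hG.le,
        mul_nonneg (mul_nonneg hWpos.le hb) hE.le,
        mul_nonneg (mul_nonneg hWpos.le hd) hG.le]
    · rw [habs]
      nlinarith [mul_le_mul_of_nonneg_right hWG (by positivity : (0:ℝ) ≤ κ*(b*(c*G))),
        mul_le_mul_of_nonneg_right (hκA rfl) (by positivity : (0:ℝ) ≤ c*(W*(G*G))),
        mul_le_mul_of_nonneg_right hκ2 (by positivity : (0:ℝ) ≤ c*(d*(G*G))),
        mul_le_mul_of_nonneg_right hW1 (by positivity : (0:ℝ) ≤ c*(d*(G*G)))]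
  · by_cases hD : d = 0
    · -- type D : d = 0, a > 0, b > 0
      subst hD
      have ha' : 0 < a := (ha).lt_of_ne (Ne.symm hA)
      have hb' : 0 < b := by linarith
      have habs : |a*0 - b*c| = b*c := by
        rw [mul_zero, zero_sub, abs_neg, abs_of_nonneg (mul_nonneg hb hc)]
      refine ⟨?_, ?_, ?_⟩
      · nlinarith [mul_le_mul_of_nonneg_right (g1 hA) hE.le,
          mul_nonneg (mul_nonneg hWpos.le ha) hE.le,
          mul_nonneg (mul_nonneg hWpos.le hc) hG.le,
          mul_nonneg (mul_nonneg (le_trans zero_le_one hK) hc) hG.le]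
      · nlinarith [mul_le_mul_of_nonneg_right (g3 hb'.ne') hE.le,
          mul_le_mul_of_nonneg_right (hα2 rfl) hG.le,
          mul_le_mul_of_nonneg_left hWE hb]
      · rw [habs]
        nlinarith [mul_le_mul_of_nonneg_right hWE (by positivity : (0:ℝ) ≤ b*(c*E)),
          mul_le_mul_of_nonneg_right (hκD rfl hA) (by positivity : (0:ℝ) ≤ b*(E*G)),
          mul_le_mul_of_nonneg_right hκ2 (by positivity : (0:ℝ) ≤ a*(b*(E*E))),
          mul_le_mul_of_nonneg_right hW1 (by positivity : (0:ℝ) ≤ a*(b*(E*E))),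
          mul_le_mul_of_nonneg_right hWE (by positivity : (0:ℝ) ≤ a*(b*E))]
    · by_cases hB : b = 0
      · -- type L : b = 0, a > 0, c > 0, d > 0, a ≤ d
        subst hB
        have ha' : 0 < a := (ha).lt_of_ne (Ne.symm hA)
        have hd' : 0 < d := (hd).lt_of_ne (Ne.symm hD)
        have hc' : 0 < c := (hc).lt_of_ne (fun h => h4 ⟨rfl, h.symm⟩)
        have had : a ≤ d := h2 rfl
        have habs : |a*d - 0*c| = a*d := by
          rw [zero_mul, sub_zero, abs_of_nonneg (mul_nonneg ha hd)]
        refine ⟨?_, ?_, ?_⟩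
        · nlinarith [mul_le_mul_of_nonneg_right (g2 hc'.ne') hG.le,
            mul_nonneg (mul_nonneg hWpos.le ha) hE.le,
            mul_nonneg (mul_nonneg hWpos.le hc) hG.le,
            mul_nonneg (mul_nonneg (le_trans zero_le_one hK) ha) hE.le]
        · nlinarith [mul_le_mul_of_nonneg_right (g4 hd'.ne') hG.le,
            mul_le_mul_of_nonneg_left hWG hd,
            mul_le_mul_of_nonneg_right had hE.le]
        · rw [habs]
          nlinarith [mul_le_mul_of_nonneg_right hWG (by positivity : (0:ℝ) ≤ c*(d*G)),
            mul_le_mul_of_nonneg_right (hκL rfl hA) (by positivity : (0:ℝ) ≤ d*(E*G)),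
            mul_le_mul_of_nonneg_right hκ2 (by positivity : (0:ℝ) ≤ c*(d*(G*G))),
            mul_le_mul_of_nonneg_right hW1 (by positivity : (0:ℝ) ≤ c*(d*(G*G))),
            mul_le_mul_of_nonneg_right hWG (by positivity : (0:ℝ) ≤ c*(d*G)*W)]
      · by_cases hC : c = 0
        · -- type U : c = 0, a > 0, b > 0, d > 0, d ≤ a
          subst hC
          have ha' : 0 < a := (ha).lt_of_ne (Ne.symm hA)
          have hd' : 0 < d := (hd).lt_of_ne (Ne.symm hD)
          have hb' : 0 < b := (hb).lt_of_ne (Ne.symm hB)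
          have hda : d ≤ a := h1 rfl
          have habs : |a*d - b*0| = a*d := by
            rw [mul_zero, sub_zero, abs_of_nonneg (mul_nonneg ha hd)]
          refine ⟨?_, ?_, ?_⟩
          · nlinarith [mul_le_mul_of_nonneg_right (g1 hA) hE.le,
              mul_le_mul_of_nonneg_left hWE ha,
              mul_le_mul_of_nonneg_right hda hG.le,
              mul_le_mul_of_nonneg_left hWE hd]
          · nlinarith [mul_le_mul_of_nonneg_right (g3 hb'.ne') hE.le,
              mul_nonneg (mul_nonneg hWpos.le hb) hE.le,
              mul_nonneg (mul_nonneg hWpos.le hd) hG.le,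
              mul_nonneg (mul_nonneg (le_trans zero_le_one hK) hd) hG.le]
          · rw [habs]
            nlinarith [mul_le_mul_of_nonneg_right (hκU hA hD rfl) (by positivity : (0:ℝ) ≤ a*(E*G)),
              mul_le_mul_of_nonneg_right hWE (by positivity : (0:ℝ) ≤ a*(b*E)),
              mul_le_mul_of_nonneg_right hκ2 (by positivity : (0:ℝ) ≤ a*(b*(E*E))),
              mul_le_mul_of_nonneg_right hW1 (by positivity : (0:ℝ) ≤ a*(b*(E*E)))]
        · -- positive type
          have ha' : 0 < a := (ha).lt_of_ne (Ne.symm hA)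
          have hb' : 0 < b := (hb).lt_of_ne (Ne.symm hB)
          have hc' : 0 < c := (hc).lt_of_ne (Ne.symm hC)
          have hd' : 0 < d := (hd).lt_of_ne (Ne.symm hD)
          have hm := hκP ha' hb' hc' hd'
          have hm0 : 0 ≤ min (a*d) (b*c) := le_min (by positivity) (by positivity)
          have habs : |a*d - b*c| ≤ a*d + b*c - 2*min (a*d) (b*c) := by
            rcases le_total (a*d) (b*c) with h | h
            · rw [abs_of_nonpos (by linarith), min_eq_left h]; linarith
            · rw [abs_of_nonneg (by linarith), min_eq_right h]; linarith
          refine ⟨?_, ?_, ?_⟩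
          · nlinarith [mul_le_mul_of_nonneg_right (g1 hA) hE.le,
              mul_le_mul_of_nonneg_right (g2 hC) hG.le,
              mul_nonneg (mul_nonneg hWpos.le ha) hE.le,
              mul_nonneg (mul_nonneg hWpos.le hc) hG.le]
          · nlinarith [mul_le_mul_of_nonneg_right (g3 hB) hE.le,
              mul_le_mul_of_nonneg_right (g4 hD) hG.le,
              mul_nonneg (mul_nonneg hWpos.le hb) hE.le,
              mul_nonneg (mul_nonneg hWpos.le hd) hG.le]
          · rcases le_total (a*d) (b*c) with h | h
            · have hm' : κ*(a*d + b*c) ≤ a*d := by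
                rw [min_eq_left h] at hm; exact hm
              rw [abs_of_nonpos (by linarith : a*d - b*c ≤ 0)]
              nlinarith [mul_le_mul_of_nonneg_right hm' (mul_pos hE hG).le,
                mul_le_mul_of_nonneg_right hκ2 (by positivity : (0:ℝ) ≤ a*(b*(E*E))),
                mul_le_mul_of_nonneg_right hW1 (by positivity : (0:ℝ) ≤ a*(b*(E*E))),
                mul_le_mul_of_nonneg_right hκ2 (by positivity : (0:ℝ) ≤ c*(d*(G*G))),
                mul_le_mul_of_nonneg_right hW1 (by positivity : (0:ℝ) ≤ c*(d*(G*G))),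
                mul_le_mul_of_nonneg_right hW1 (by positivity : (0:ℝ) ≤ a*(d*(E*G))),
                (by positivity : (0:ℝ) ≤ a*(d*(E*G))),
                (by positivity : (0:ℝ) ≤ a*(b*(E*E))),
                (by positivity : (0:ℝ) ≤ c*(d*(G*G)))]
            · have hm' : κ*(a*d + b*c) ≤ b*c := by
                rw [min_eq_right h] at hm; exact hm
              rw [abs_of_nonneg (by linarith : 0 ≤ a*d - b*c)]
              nlinarith [mul_le_mul_of_nonneg_right hm' (mul_pos hE hG).le,
                mul_le_mul_of_nonneg_right hκ2 (by positivity : (0:ℝ) ≤ a*(b*(E*E))),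
                mul_le_mul_of_nonneg_right hW1 (by positivity : (0:ℝ) ≤ a*(b*(E*E))),
                mul_le_mul_of_nonneg_right hκ2 (by positivity : (0:ℝ) ≤ c*(d*(G*G))),
                mul_le_mul_of_nonneg_right hW1 (by positivity : (0:ℝ) ≤ c*(d*(G*G))),
                mul_le_mul_of_nonneg_right hW1 (by positivity : (0:ℝ) ≤ b*(c*(E*G))),
                (by positivity : (0:ℝ) ≤ b*(c*(E*G))),
                (by positivity : (0:ℝ) ≤ a*(b*(E*E))),
                (by positivity : (0:ℝ) ≤ c*(d*(G*G)))]

noncomputable def Wf (α : ℝ) (P : Matrix (Fin 2) (Fin 2) ℝ) : ℝ :=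
  max (max (α * Gcol P / Ecol P) (Ecol P / Gcol P)) 1

noncomputable def Df (P : Matrix (Fin 2) (Fin 2) ℝ) : ℝ := |det2 P| / (Ecol P * Gcol P)

lemma step (α κ K : ℝ) (hαp : 0 < α) (hκ0 : 0 < κ) (hκ2 : κ ≤ 1/2) (hK : 1 ≤ K)
    (Q : Matrix (Fin 2) (Fin 2) ℝ) (hQ : ColAllowable Q)
    (h1 : Q 1 0 = 0 → Q 1 1 ≤ Q 0 0) (h2 : Q 0 1 = 0 → Q 0 0 ≤ Q 1 1)
    (h4 : ¬(Q 0 1 = 0 ∧ Q 1 0 = 0)) (h5 : ¬(Q 0 0 = 0 ∧ Q 1 1 = 0))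
    (hα1 : Q 0 0 = 0 → α * Q 0 1 ≤ Q 1 0)
    (hα2 : Q 1 1 = 0 → Q 1 0 ≤ α * Q 0 1)
    (hκU : Q 0 0 ≠ 0 → Q 1 1 ≠ 0 → Q 1 0 = 0 → 2*κ*(Q 1 1) ≤ α * Q 0 1)
    (hκL : Q 0 1 = 0 → Q 0 0 ≠ 0 → 2*κ*(Q 0 0) ≤ Q 1 0)
    (hκA : Q 0 0 = 0 → 2*κ*(Q 0 1) ≤ Q 1 1)
    (hκD : Q 1 1 = 0 → Q 0 0 ≠ 0 → 2*κ*(Q 1 0) ≤ α * Q 0 0)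
    (hκP : 0 < Q 0 0 → 0 < Q 0 1 → 0 < Q 1 0 → 0 < Q 1 1 →
      κ * (Q 0 0 * Q 1 1 + Q 0 1 * Q 1 0) ≤ min (Q 0 0 * Q 1 1) (Q 0 1 * Q 1 0))
    (g1 : Q 0 0 ≠ 0 → α * Q 0 1 ≤ K * Q 0 0)
    (g2 : Q 1 0 ≠ 0 → α * Q 1 1 ≤ K * Q 1 0)
    (g3 : Q 0 1 ≠ 0 → Q 0 0 ≤ K * Q 0 1)
    (g4 : Q 1 1 ≠ 0 → Q 1 0 ≤ K * Q 1 1)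
    (P : Matrix (Fin 2) (Fin 2) ℝ) (hP : ColAllowable P) :
    Wf α (P * Q) ≤ Wf α P + K ∧ Df (P * Q) ≤ (1 - κ / Wf α P) * Df P := by
  have hE : 0 < Ecol P := hP.2.1
  have hG : 0 < Gcol P := hP.2.2
  have hW1 : (1:ℝ) ≤ Wf α P := le_max_right _ _
  have hWpos : (0:ℝ) < Wf α P := lt_of_lt_of_le one_pos hW1
  have hWE : α * Gcol P ≤ Wf α P * Ecol P := by
    have h : α * Gcol P / Ecol P ≤ Wf α P :=
      le_trans (le_max_left _ _) (le_max_left _ _)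
    rw [div_le_iff₀ hE] at h; linarith
  have hWG : Ecol P ≤ Wf α P * Gcol P := by
    have h : Ecol P / Gcol P ≤ Wf α P :=
      le_trans (le_max_right _ _) (le_max_left _ _)
    rw [div_le_iff₀ hG] at h; linarith
  obtain ⟨kA, kB, kC⟩ := core α κ K (Q 0 0) (Q 0 1) (Q 1 0) (Q 1 1)
    (Ecol P) (Gcol P) (Wf α P) (hQ.1 0 0) (hQ.1 0 1) (hQ.1 1 0) (hQ.1 1 1)
    hQ.2.1 hQ.2.2 hE hG hW1 hWE hWG hαp hκ0 hκ2 hK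
    h1 h2 h4 h5 hα1 hα2 hκU hκL hκA hκD hκP g1 g2 g3 g4
  have hPQ := colAllowable_mul hP hQ
  have hE' : 0 < Ecol (P * Q) := hPQ.2.1
  have hG' : 0 < Gcol (P * Q) := hPQ.2.2
  constructor
  · apply max_le (max_le ?_ ?_) (by linarith)
    · rw [div_le_iff₀ hE', Ecol_mul, Gcol_mul]; exact kA
    · rw [div_le_iff₀ hG', Ecol_mul, Gcol_mul]; exact kB
  · have key : Wf α P * (|det2 Q| * (Ecol P * Gcol P)) ≤
        (Wf α P - κ) * (Ecol (P * Q) * Gcol (P * Q)) := by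
      rw [Ecol_mul, Gcol_mul]
      have hq : det2 Q = Q 0 0 * Q 1 1 - Q 0 1 * Q 1 0 := rfl
      rw [hq]; linarith [kC]
    have h2' : (1 - κ / Wf α P) = (Wf α P - κ) / Wf α P := by
      field_simp
    rw [Df, Df, det2_mul, abs_mul, h2']
    rw [div_mul_div_comm, div_le_div_iff₀ (mul_pos hE' hG')
      (mul_pos hWpos (mul_pos hE hG))]
    calc |det2 P| * |det2 Q| * (Wf α P * (Ecol P * Gcol P))
        = |det2 P| * (Wf α P * (|det2 Q| * (Ecol P * Gcol P))) := by ring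
      _ ≤ |det2 P| * ((Wf α P - κ) * (Ecol (P * Q) * Gcol (P * Q))) :=
          mul_le_mul_of_nonneg_left key (abs_nonneg _)
      _ = (Wf α P - κ) * |det2 P| * (Ecol (P * Q) * Gcol (P * Q)) := by ring


lemma mulVec_apply₂ (P : Matrix (Fin 2) (Fin 2) ℝ) (V : Fin 2 → ℝ) (i : Fin 2) :
    (P.mulVec V) i = P i 0 * V 0 + P i 1 * V 1 := by
  simp [Matrix.mulVec, dotProduct, Fin.sum_univ_two]

lemma osc (P : Matrix (Fin 2) (Fin 2) ℝ) (hP : ColAllowable P) (Y Z : Fin 2 → ℝ)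
    (hY0 : 0 ≤ Y 0) (hY1 : 0 ≤ Y 1) (hYs : 0 < Y 0 + Y 1)
    (hZ0 : 0 ≤ Z 0) (hZ1 : 0 ≤ Z 1) (hZs : 0 < Z 0 + Z 1) :
    |nv (P.mulVec Y) - nv (P.mulVec Z)| ≤ Df P := by
  have hE : 0 < Ecol P := hP.2.1
  have hG : 0 < Gcol P := hP.2.2
  have hDY : 0 < Ecol P * Y 0 + Gcol P * Y 1 := by
    nlinarith [pos_comb hY0 hY1 hYs hE hG]
  have hDZ : 0 < Ecol P * Z 0 + Gcol P * Z 1 := by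
    nlinarith [pos_comb hZ0 hZ1 hZs hE hG]
  have eY : nv (P.mulVec Y) =
      (P 0 0 * Y 0 + P 0 1 * Y 1) / (Ecol P * Y 0 + Gcol P * Y 1) := by
    rw [nv, show (P.mulVec Y) 0 + (P.mulVec Y) 1
        = Ecol P * Y 0 + Gcol P * Y 1 by
      rw [mulVec_apply₂, mulVec_apply₂]; simp only [Ecol, Gcol]; ring,
      mulVec_apply₂]
  have eZ : nv (P.mulVec Z) =
      (P 0 0 * Z 0 + P 0 1 * Z 1) / (Ecol P * Z 0 + Gcol P * Z 1) := by
    rw [nv, show (P.mulVec Z) 0 + (P.mulVec Z) 1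
        = Ecol P * Z 0 + Gcol P * Z 1 by
      rw [mulVec_apply₂, mulVec_apply₂]; simp only [Ecol, Gcol]; ring,
      mulVec_apply₂]
  have hnum : (P 0 0 * Y 0 + P 0 1 * Y 1) * (Ecol P * Z 0 + Gcol P * Z 1)
      - (Ecol P * Y 0 + Gcol P * Y 1) * (P 0 0 * Z 0 + P 0 1 * Z 1)
      = det2 P * (Y 0 * Z 1 - Y 1 * Z 0) := by
    simp only [Ecol, Gcol, det2]; ring
  rw [eY, eZ, div_sub_div _ _ hDY.ne' hDZ.ne', hnum, Df, abs_div, abs_mul,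
    abs_of_pos (mul_pos hDY hDZ)]
  rw [div_le_div_iff₀ (mul_pos hDY hDZ) (mul_pos hE hG)]
  have hkey : |Y 0 * Z 1 - Y 1 * Z 0| * (Ecol P * Gcol P) ≤
      (Ecol P * Y 0 + Gcol P * Y 1) * (Ecol P * Z 0 + Gcol P * Z 1) := by
    rcases abs_cases (Y 0 * Z 1 - Y 1 * Z 0) with ⟨h, _⟩ | ⟨h, _⟩ <;> rw [h] <;>
      nlinarith [mul_nonneg hY0 hZ0, mul_nonneg hY1 hZ1, mul_nonneg hY1 hZ0,
        mul_nonneg hY0 hZ1, sq_nonneg (Ecol P), sq_nonneg (Gcol P),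
        mul_pos hE hG]
  calc |det2 P| * |Y 0 * Z 1 - Y 1 * Z 0| * (Ecol P * Gcol P)
      = |det2 P| * (|Y 0 * Z 1 - Y 1 * Z 0| * (Ecol P * Gcol P)) := by ring
    _ ≤ |det2 P| * ((Ecol P * Y 0 + Gcol P * Y 1) * (Ecol P * Z 0 + Gcol P * Z 1)) :=
        mul_le_mul_of_nonneg_left hkey (abs_nonneg _)
    _ = |det2 P| * ((Ecol P * Y 0 + Gcol P * Y 1) * (Ecol P * Z 0 + Gcol P * Z 1)) := rfl

lemma Pprod_zero {s : ℕ} (M : Fin s → Matrix (Fin 2) (Fin 2) ℝ) (ω : ℕ → Fin s) :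
    Pprod M ω 0 = 1 := by simp [Pprod]

lemma Pprod_succ {s : ℕ} (M : Fin s → Matrix (Fin 2) (Fin 2) ℝ) (ω : ℕ → Fin s) (n : ℕ) :
    Pprod M ω (n+1) = Pprod M ω n * M (ω n) := by
  simp [Pprod, List.range_succ]

lemma Pprod_add {s : ℕ} (M : Fin s → Matrix (Fin 2) (Fin 2) ℝ) (ω : ℕ → Fin s) (n m : ℕ) :
    Pprod M ω (n + m) = Pprod M ω n * Pprod M (fun i => ω (n + i)) m := by
  induction m with
  | zero => simp [Pprod_zero]
  | succ m ih =>
      rw [← add_assoc, Pprod_succ, ih, Pprod_succ, mul_assoc]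

end S9

theorem stmt9 (s : ℕ) (M : Fin s → Matrix (Fin 2) (Fin 2) ℝ)
    (hM : ∀ k, ColAllowable (M k))
    (h1 : ∀ k, M k 1 0 = 0 → M k 1 1 ≤ M k 0 0)
    (h2 : ∀ k, M k 0 1 = 0 → M k 0 0 ≤ M k 1 1)
    (h3 : ∀ k l, M k 1 1 = 0 → M l 0 0 = 0 →
      M l 0 1 * M k 1 0 ≤ M k 0 1 * M l 1 0)
    (h4 : ∀ k, ¬(M k 0 1 = 0 ∧ M k 1 0 = 0))
    (h5 : ∀ k, ¬(M k 0 0 = 0 ∧ M k 1 1 = 0)) :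
    ∀ V : Fin 2 → ℝ, 0 < V 0 → 0 < V 1 →
      ∃ F : (ℕ → Fin s) → (Fin 2 → ℝ),
        TendstoUniformly (fun n ω => Nv ((Pprod M ω n).mulVec V)) F atTop := by
  intro V hV0 hV1
  classical
  -- construction of α
  obtain ⟨α, hαp, hα1, hα2⟩ : ∃ α : ℝ, 0 < α ∧
      (∀ l, M l 0 0 = 0 → α * M l 0 1 ≤ M l 1 0) ∧
      (∀ k, M k 1 1 = 0 → M k 1 0 ≤ α * M k 0 1) := by
    by_cases hA : ∃ l, M l 0 0 = 0 ∧ M l 0 1 ≠ 0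
    · obtain ⟨l₀, hl₀a, hl₀b⟩ := hA
      set T : Finset (Fin s) :=
        Finset.univ.filter (fun l => M l 0 0 = 0 ∧ M l 0 1 ≠ 0) with hTdef
      have hTmem : ∀ l, l ∈ T ↔ (M l 0 0 = 0 ∧ M l 0 1 ≠ 0) := by
        intro l; simp [hTdef]
      have hTne : T.Nonempty := ⟨l₀, (hTmem l₀).2 ⟨hl₀a, hl₀b⟩⟩
      have hbpos : ∀ l ∈ T, 0 < M l 0 1 := fun l hl =>
        ((hM l).1 0 1).lt_of_ne (Ne.symm ((hTmem l).1 hl).2)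
      have hcpos : ∀ l ∈ T, 0 < M l 1 0 := by
        intro l hl
        have h := (hM l).2.1
        rw [((hTmem l).1 hl).1] at h
        linarith
      refine ⟨T.inf' hTne (fun l => M l 1 0 / M l 0 1), ?_, ?_, ?_⟩
      · rw [Finset.lt_inf'_iff]
        exact fun l hl => div_pos (hcpos l hl) (hbpos l hl)
      · intro l hla
        by_cases hlb : M l 0 1 = 0
        · rw [hlb, mul_zero]; exact (hM l).1 1 0
        · have hlT : l ∈ T := (hTmem l).2 ⟨hla, hlb⟩
          have h := Finset.inf'_le (fun l => M l 1 0 / M l 0 1) hlT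
          rw [le_div_iff₀ (hbpos l hlT)] at h
          linarith
      · intro k hk
        obtain ⟨l, hlT, hle⟩ :=
          Finset.exists_mem_eq_inf' hTne (fun l => M l 1 0 / M l 0 1)
        have h3' := h3 k l hk ((hTmem l).1 hlT).1
        have hb := hbpos l hlT
        rw [hle, div_mul_eq_mul_div, le_div_iff₀ hb]
        nlinarith
    · push_neg at hA
      refine ⟨1 + ∑ k, (if M k 1 1 = 0 then M k 1 0 / M k 0 1 else 0), ?_, ?_, ?_⟩
      · have h0 : ∀ k : Fin s, (0:ℝ) ≤ (if M k 1 1 = 0 then M k 1 0 / M k 0 1 else 0) := by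
          intro k
          split
          · exact div_nonneg ((hM k).1 1 0) ((hM k).1 0 1)
          · exact le_refl 0
        have h := Finset.sum_nonneg (fun k (_ : k ∈ Finset.univ) => h0 k)
        linarith
      · intro l hla
        rw [hA l hla, mul_zero]
        exact (hM l).1 1 0
      · intro k hk
        have hbk : 0 < M k 0 1 := by
          have h := (hM k).2.2
          rw [hk, add_zero] at h
          exact h
        have hterm : M k 1 0 / M k 0 1 ≤
            ∑ j, (if M j 1 1 = 0 then M j 1 0 / M j 0 1 else 0) := by
          have h0 : ∀ j : Fin s, (0:ℝ) ≤ (if M j 1 1 = 0 then M j 1 0 / M j 0 1 else 0) := by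
            intro j
            split
            · exact div_nonneg ((hM j).1 1 0) ((hM j).1 0 1)
            · exact le_refl 0
          have := Finset.single_le_sum
            (f := fun j => if M j 1 1 = 0 then M j 1 0 / M j 0 1 else 0)
            (fun j _ => h0 j)
            (Finset.mem_univ k)
          rwa [if_pos hk] at this
        rw [div_le_iff₀ hbk] at hterm
        nlinarith [hbk]
  -- construction of K
  obtain ⟨K, hK, g1, g2, g3, g4⟩ : ∃ K : ℝ, 1 ≤ K ∧
      (∀ k, M k 0 0 ≠ 0 → α * M k 0 1 ≤ K * M k 0 0) ∧
      (∀ k, M k 1 0 ≠ 0 → α * M k 1 1 ≤ K * M k 1 0) ∧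
      (∀ k, M k 0 1 ≠ 0 → M k 0 0 ≤ K * M k 0 1) ∧
      (∀ k, M k 1 1 ≠ 0 → M k 1 0 ≤ K * M k 1 1) := by
    set S : Fin s → ℝ := fun k => α * M k 0 1 / M k 0 0 + α * M k 1 1 / M k 1 0
      + M k 0 0 / M k 0 1 + M k 1 0 / M k 1 1 with hSdef
    have hS0 : ∀ k, 0 ≤ S k := fun k => by
      have h := hM k
      refine add_nonneg (add_nonneg (add_nonneg ?_ ?_) ?_) ?_
      · exact div_nonneg (mul_nonneg hαp.le (h.1 0 1)) (h.1 0 0)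
      · exact div_nonneg (mul_nonneg hαp.le (h.1 1 1)) (h.1 1 0)
      · exact div_nonneg (h.1 0 0) (h.1 0 1)
      · exact div_nonneg (h.1 1 0) (h.1 1 1)
    have hSsum : ∀ k, S k ≤ ∑ j, S j := fun k =>
      Finset.single_le_sum (fun j _ => hS0 j) (Finset.mem_univ k)
    refine ⟨1 + ∑ j, S j, ?_, ?_, ?_, ?_, ?_⟩
    · have := Finset.sum_nonneg (fun j (_ : j ∈ Finset.univ) => hS0 j)
      linarith
    · intro k hk
      have ha : 0 < M k 0 0 := ((hM k).1 0 0).lt_of_ne (Ne.symm hk)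
      rw [← div_le_iff₀ ha]
      have hp1 : α * M k 1 1 / M k 1 0 ≥ 0 :=
        div_nonneg (mul_nonneg hαp.le ((hM k).1 1 1)) ((hM k).1 1 0)
      have hp2 : M k 0 0 / M k 0 1 ≥ 0 := div_nonneg ((hM k).1 0 0) ((hM k).1 0 1)
      have hp3 : M k 1 0 / M k 1 1 ≥ 0 := div_nonneg ((hM k).1 1 0) ((hM k).1 1 1)
      have := hSsum k
      rw [hSdef] at this
      simp only at this
      linarith
    · intro k hk
      have hc : 0 < M k 1 0 := ((hM k).1 1 0).lt_of_ne (Ne.symm hk)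
      rw [← div_le_iff₀ hc]
      have hp1 : α * M k 0 1 / M k 0 0 ≥ 0 :=
        div_nonneg (mul_nonneg hαp.le ((hM k).1 0 1)) ((hM k).1 0 0)
      have hp2 : M k 0 0 / M k 0 1 ≥ 0 := div_nonneg ((hM k).1 0 0) ((hM k).1 0 1)
      have hp3 : M k 1 0 / M k 1 1 ≥ 0 := div_nonneg ((hM k).1 1 0) ((hM k).1 1 1)
      have := hSsum k
      rw [hSdef] at this
      simp only at this
      linarith
    · intro k hk
      have hb : 0 < M k 0 1 := ((hM k).1 0 1).lt_of_ne (Ne.symm hk)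
      rw [← div_le_iff₀ hb]
      have hp1 : α * M k 0 1 / M k 0 0 ≥ 0 :=
        div_nonneg (mul_nonneg hαp.le ((hM k).1 0 1)) ((hM k).1 0 0)
      have hp2 : α * M k 1 1 / M k 1 0 ≥ 0 :=
        div_nonneg (mul_nonneg hαp.le ((hM k).1 1 1)) ((hM k).1 1 0)
      have hp3 : M k 1 0 / M k 1 1 ≥ 0 := div_nonneg ((hM k).1 1 0) ((hM k).1 1 1)
      have := hSsum k
      rw [hSdef] at this
      simp only at this
      linarith
    · intro k hk
      have hd : 0 < M k 1 1 := ((hM k).1 1 1).lt_of_ne (Ne.symm hk)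
      rw [← div_le_iff₀ hd]
      have hp1 : α * M k 0 1 / M k 0 0 ≥ 0 :=
        div_nonneg (mul_nonneg hαp.le ((hM k).1 0 1)) ((hM k).1 0 0)
      have hp2 : α * M k 1 1 / M k 1 0 ≥ 0 :=
        div_nonneg (mul_nonneg hαp.le ((hM k).1 1 1)) ((hM k).1 1 0)
      have hp3 : M k 0 0 / M k 0 1 ≥ 0 := div_nonneg ((hM k).1 0 0) ((hM k).1 0 1)
      have := hSsum k
      rw [hSdef] at this
      simp only at this
      linarith
  -- construction of κ
  obtain ⟨κ, hκ0, hκ2, hκU, hκL, hκA, hκD, hκP⟩ : ∃ κ : ℝ, 0 < κ ∧ κ ≤ 1/2 ∧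
      (∀ k, M k 0 0 ≠ 0 → M k 1 1 ≠ 0 → M k 1 0 = 0 →
        2*κ*(M k 1 1) ≤ α * M k 0 1) ∧
      (∀ k, M k 0 1 = 0 → M k 0 0 ≠ 0 → 2*κ*(M k 0 0) ≤ M k 1 0) ∧
      (∀ k, M k 0 0 = 0 → 2*κ*(M k 0 1) ≤ M k 1 1) ∧
      (∀ k, M k 1 1 = 0 → M k 0 0 ≠ 0 → 2*κ*(M k 1 0) ≤ α * M k 0 0) ∧
      (∀ k, 0 < M k 0 0 → 0 < M k 0 1 → 0 < M k 1 0 → 0 < M k 1 1 →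
        κ * (M k 0 0 * M k 1 1 + M k 0 1 * M k 1 0) ≤
          min (M k 0 0 * M k 1 1) (M k 0 1 * M k 1 0)) := by
    set φ : Fin s → ℝ := fun k =>
      if M k 0 0 = 0 then (if M k 0 1 = 0 then 1 else M k 1 1 / (2 * M k 0 1))
      else if M k 1 1 = 0 then
        (if M k 1 0 = 0 then 1 else α * M k 0 0 / (2 * M k 1 0))
      else if M k 0 1 = 0 then M k 1 0 / (2 * M k 0 0)
      else if M k 1 0 = 0 then α * M k 0 1 / (2 * M k 1 1)
      else min (M k 0 0 * M k 1 1) (M k 0 1 * M k 1 0) /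
        (M k 0 0 * M k 1 1 + M k 0 1 * M k 1 0) with hφdef
    have hφpos : ∀ k, 0 < min (φ k) 1 := by
      intro k
      refine lt_min ?_ one_pos
      rw [hφdef]
      simp only
      by_cases hA : M k 0 0 = 0
      · rw [if_pos hA]
        by_cases hB : M k 0 1 = 0
        · rw [if_pos hB]; norm_num
        · rw [if_neg hB]
          have hd : 0 < M k 1 1 :=
            ((hM k).1 1 1).lt_of_ne (fun h0 => h5 k ⟨hA, h0.symm⟩)
          have hb : 0 < M k 0 1 := ((hM k).1 0 1).lt_of_ne (Ne.symm hB)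
          positivity
      · rw [if_neg hA]
        have ha : 0 < M k 0 0 := ((hM k).1 0 0).lt_of_ne (Ne.symm hA)
        by_cases hD : M k 1 1 = 0
        · rw [if_pos hD]
          by_cases hC : M k 1 0 = 0
          · rw [if_pos hC]; norm_num
          · rw [if_neg hC]
            have hc : 0 < M k 1 0 := ((hM k).1 1 0).lt_of_ne (Ne.symm hC)
            positivity
        · rw [if_neg hD]
          have hd : 0 < M k 1 1 := ((hM k).1 1 1).lt_of_ne (Ne.symm hD)
          by_cases hB : M k 0 1 = 0
          · rw [if_pos hB]
            have hc : 0 < M k 1 0 :=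
              ((hM k).1 1 0).lt_of_ne (fun h0 => h4 k ⟨hB, h0.symm⟩)
            positivity
          · rw [if_neg hB]
            have hb : 0 < M k 0 1 := ((hM k).1 0 1).lt_of_ne (Ne.symm hB)
            by_cases hC : M k 1 0 = 0
            · rw [if_pos hC]; positivity
            · rw [if_neg hC]
              have hc : 0 < M k 1 0 := ((hM k).1 1 0).lt_of_ne (Ne.symm hC)
              exact div_pos (lt_min (by positivity) (by positivity)) (by positivity)
    have hprodpos : 0 < ∏ j, min (φ j) 1 :=
      Finset.prod_pos (fun j _ => hφpos j)
    have hprodle1 : (∏ j, min (φ j) 1) ≤ 1 :=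
      Finset.prod_le_one (fun j _ => (hφpos j).le) (fun j _ => min_le_right _ _)
    have hprod_le : ∀ k, (∏ j, min (φ j) 1) ≤ min (φ k) 1 := by
      intro k
      rw [← Finset.mul_prod_erase Finset.univ _ (Finset.mem_univ k)]
      have h1' : ∏ j ∈ Finset.univ.erase k, min (φ j) 1 ≤ 1 :=
        Finset.prod_le_one (fun j _ => (hφpos j).le) (fun j _ => min_le_right _ _)
      calc min (φ k) 1 * ∏ j ∈ Finset.univ.erase k, min (φ j) 1
          ≤ min (φ k) 1 * 1 := mul_le_mul_of_nonneg_left h1' (hφpos k).le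
        _ = min (φ k) 1 := mul_one _
    have h2κ : ∀ k, 2 * ((1/2) * ∏ j, min (φ j) 1) ≤ φ k := by
      intro k
      have := hprod_le k
      have := min_le_left (φ k) 1
      linarith
    refine ⟨(1/2) * ∏ j, min (φ j) 1, mul_pos (by norm_num) hprodpos,
      by nlinarith [hprodle1, hprodpos], ?_, ?_, ?_, ?_, ?_⟩
    · intro k hA hD hC
      have hb : M k 0 1 ≠ 0 := fun h => h4 k ⟨h, hC⟩
      have hd : 0 < M k 1 1 := ((hM k).1 1 1).lt_of_ne (Ne.symm hD)
      have h := h2κ k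
      rw [hφdef] at h
      simp only at h
      rw [if_neg hA, if_neg hD, if_neg hb, if_pos hC,
        le_div_iff₀ (by linarith : (0:ℝ) < 2 * M k 1 1)] at h
      nlinarith [mul_nonneg hprodpos.le hd.le]
    · intro k hB hA
      have hd : M k 1 1 ≠ 0 := by
        intro h
        have hg := (hM k).2.2
        rw [hB, h] at hg
        norm_num at hg
      have ha : 0 < M k 0 0 := ((hM k).1 0 0).lt_of_ne (Ne.symm hA)
      have h := h2κ k
      rw [hφdef] at h
      simp only at h
      rw [if_neg hA, if_neg hd, if_pos hB,
        le_div_iff₀ (by linarith : (0:ℝ) < 2 * M k 0 0)] at h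
      nlinarith [mul_nonneg hprodpos.le ha.le]
    · intro k hA
      by_cases hB : M k 0 1 = 0
      · rw [hB, mul_zero]; exact (hM k).1 1 1
      · have hb : 0 < M k 0 1 := ((hM k).1 0 1).lt_of_ne (Ne.symm hB)
        have h := h2κ k
        rw [hφdef] at h
        simp only at h
        rw [if_pos hA, if_neg hB,
          le_div_iff₀ (by linarith : (0:ℝ) < 2 * M k 0 1)] at h
        nlinarith [mul_nonneg hprodpos.le hb.le]
    · intro k hD hA
      by_cases hC : M k 1 0 = 0
      · rw [hC, mul_zero]
        exact mul_nonneg hαp.le ((hM k).1 0 0)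
      · have hc : 0 < M k 1 0 := ((hM k).1 1 0).lt_of_ne (Ne.symm hC)
        have h := h2κ k
        rw [hφdef] at h
        simp only at h
        rw [if_neg hA, if_pos hD, if_neg hC,
          le_div_iff₀ (by linarith : (0:ℝ) < 2 * M k 1 0)] at h
        nlinarith [mul_nonneg hprodpos.le hc.le]
    · intro k ha hb hc hd
      have h := h2κ k
      rw [hφdef] at h
      simp only at h
      rw [if_neg ha.ne', if_neg hd.ne', if_neg hb.ne', if_neg hc.ne',
        le_div_iff₀ (by positivity : (0:ℝ) < M k 0 0 * M k 1 1 + M k 0 1 * M k 1 0)] at h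
      nlinarith [mul_nonneg hprodpos.le
        (by positivity : (0:ℝ) ≤ M k 0 0 * M k 1 1 + M k 0 1 * M k 1 0)]
  -- main induction
  set W₀ : ℝ := max α 1 with hW₀def
  have hW₀1 : (1:ℝ) ≤ W₀ := le_max_right _ _
  have hWK : ∀ n : ℕ, (1:ℝ) ≤ W₀ + K * n := fun n => by
    have h : (0:ℝ) ≤ K * n := mul_nonneg (by linarith) (Nat.cast_nonneg n)
    linarith
  set B : ℕ → ℝ := fun n => ∏ i ∈ Finset.range n, (1 - κ / (W₀ + K * i)) with hBdef
  have hfac0 : ∀ i : ℕ, 0 ≤ 1 - κ / (W₀ + K * i) := fun i => by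
    have h := div_le_self hκ0.le (hWK i)
    linarith
  have hB0 : ∀ n, 0 ≤ B n := fun n => Finset.prod_nonneg fun i _ => hfac0 i
  have main : ∀ (ω : ℕ → Fin s) (n : ℕ), ColAllowable (Pprod M ω n) ∧
      S9.Wf α (Pprod M ω n) ≤ W₀ + K * n ∧ S9.Df (Pprod M ω n) ≤ B n := by
    intro ω n
    induction n with
    | zero =>
        rw [S9.Pprod_zero]
        have hE1 : S9.Ecol (1 : Matrix (Fin 2) (Fin 2) ℝ) = 1 := by
          norm_num [S9.Ecol, Matrix.one_apply]
        have hG1 : S9.Gcol (1 : Matrix (Fin 2) (Fin 2) ℝ) = 1 := by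
          norm_num [S9.Gcol, Matrix.one_apply]
        have hd1 : S9.det2 (1 : Matrix (Fin 2) (Fin 2) ℝ) = 1 := by
          norm_num [S9.det2, Matrix.one_apply]
        refine ⟨⟨fun i j => ?_, by norm_num [Matrix.one_apply], by norm_num [Matrix.one_apply]⟩, ?_, ?_⟩
        · rw [Matrix.one_apply]; split <;> norm_num
        · rw [S9.Wf, hE1, hG1]
          have : max (max (α * 1 / 1) (1 / 1)) 1 = max α 1 := by
            norm_num [max_assoc]
          rw [this]
          simp [hW₀def]
        · rw [S9.Df, hE1, hG1, hd1, hBdef]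
          norm_num
    | succ n ih =>
        obtain ⟨hPa, hPW, hPD⟩ := ih
        have hst := S9.step α κ K hαp hκ0 hκ2 hK (M (ω n)) (hM (ω n))
          (h1 (ω n)) (h2 (ω n)) (h4 (ω n)) (h5 (ω n)) (hα1 (ω n)) (hα2 (ω n))
          (hκU (ω n)) (hκL (ω n)) (hκA (ω n)) (hκD (ω n)) (hκP (ω n))
          (g1 (ω n)) (g2 (ω n)) (g3 (ω n)) (g4 (ω n)) (Pprod M ω n) hPa
        rw [S9.Pprod_succ]
        refine ⟨S9.colAllowable_mul hPa (hM (ω n)), ?_, ?_⟩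
        · push_cast
          have := hst.1
          linarith
        · have hW1n : (1:ℝ) ≤ S9.Wf α (Pprod M ω n) := le_max_right _ _
          have hWpos : (0:ℝ) < S9.Wf α (Pprod M ω n) := by linarith
          have hDf0 : 0 ≤ S9.Df (Pprod M ω n) := by
            rw [S9.Df]
            exact div_nonneg (abs_nonneg _) (mul_nonneg hPa.2.1.le hPa.2.2.le)
          have hmono : 1 - κ / S9.Wf α (Pprod M ω n) ≤ 1 - κ / (W₀ + K * n) := by
            have h := div_le_div_of_nonneg_left hκ0.le hWpos hPW
            linarith
          calc S9.Df (Pprod M ω n * M (ω n))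
              ≤ (1 - κ / S9.Wf α (Pprod M ω n)) * S9.Df (Pprod M ω n) := hst.2
            _ ≤ (1 - κ / (W₀ + K * n)) * B n := mul_le_mul hmono hPD hDf0 (hfac0 n)
            _ = B (n+1) := by
                rw [hBdef]
                simp only
                rw [Finset.prod_range_succ]
                ring
  -- B tends to 0
  have hBtend : Tendsto B atTop (nhds 0) := by
    have hle : ∀ n, B n ≤ Real.exp (-(∑ i ∈ Finset.range n, κ / (W₀ + K * i))) := by
      intro n
      calc B n ≤ ∏ i ∈ Finset.range n, Real.exp (-(κ / (W₀ + K * i))) := by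
            apply Finset.prod_le_prod (fun i _ => hfac0 i)
            intro i _
            have := Real.add_one_le_exp (-(κ / (W₀ + K * i)))
            linarith
        _ = Real.exp (∑ i ∈ Finset.range n, -(κ / (W₀ + K * i))) :=
            (Real.exp_sum _ _).symm
        _ = Real.exp (-(∑ i ∈ Finset.range n, κ / (W₀ + K * i))) := by
            rw [Finset.sum_neg_distrib]
    have hsum : Tendsto (fun n => ∑ i ∈ Finset.range n, κ / (W₀ + K * i))
        atTop atTop := by
      have hpos : (0:ℝ) < κ / (W₀ + K) := div_pos hκ0 (by linarith)
      have hb2 : Tendsto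
          (fun n => (κ/(W₀+K)) * ∑ i ∈ Finset.range n, (1/(i+1) : ℝ))
          atTop atTop :=
        Tendsto.const_mul_atTop hpos Real.tendsto_sum_range_one_div_nat_succ_atTop
      apply tendsto_atTop_mono ?_ hb2
      intro n
      rw [Finset.mul_sum]
      apply Finset.sum_le_sum
      intro i _
      have h1' : (0:ℝ) < W₀ + K * i := by linarith [hWK i]
      have h2' : (0:ℝ) < (W₀ + K) * ((i:ℝ) + 1) := by
        have : (0:ℝ) ≤ (i:ℝ) := Nat.cast_nonneg i
        nlinarith
      have h3' : W₀ + K * i ≤ (W₀ + K) * ((i:ℝ) + 1) := by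
        have : (0:ℝ) ≤ (i:ℝ) := Nat.cast_nonneg i
        nlinarith
      calc (κ/(W₀+K)) * (1/((i:ℝ)+1)) = κ / ((W₀+K)*((i:ℝ)+1)) := by
            rw [div_mul_div_comm, mul_one]
        _ ≤ κ / (W₀ + K * i) := div_le_div_of_nonneg_left hκ0.le h1' h3'
    have hexp : Tendsto
        (fun n => Real.exp (-(∑ i ∈ Finset.range n, κ / (W₀ + K * i))))
        atTop (nhds 0) :=
      Real.tendsto_exp_atBot.comp (tendsto_neg_atTop_atBot.comp hsum)
    exact tendsto_of_tendsto_of_tendsto_of_le_of_le tendsto_const_nhds hexp hB0 hle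
  -- the scalar sequence
  set x : (ℕ → Fin s) → ℕ → ℝ := fun ω n => nv ((Pprod M ω n).mulVec V) with hxdef
  have hosc : ∀ ω n m, |x ω (n + m) - x ω n| ≤ B n := by
    intro ω n m
    have hPn := (main ω n).1
    have hQ := (main (fun i => ω (n + i)) m).1
    set Q := Pprod M (fun i => ω (n + i)) m with hQdef
    have hY0 : 0 ≤ (Q.mulVec V) 0 := by
      rw [S9.mulVec_apply₂]
      exact add_nonneg (mul_nonneg (hQ.1 0 0) hV0.le) (mul_nonneg (hQ.1 0 1) hV1.le)
    have hY1 : 0 ≤ (Q.mulVec V) 1 := by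
      rw [S9.mulVec_apply₂]
      exact add_nonneg (mul_nonneg (hQ.1 1 0) hV0.le) (mul_nonneg (hQ.1 1 1) hV1.le)
    have hYs : 0 < (Q.mulVec V) 0 + (Q.mulVec V) 1 := by
      rw [S9.mulVec_apply₂, S9.mulVec_apply₂]
      nlinarith [S9.pos_comb hV0.le hV1.le (by linarith : (0:ℝ) < V 0 + V 1)
        hQ.2.1 hQ.2.2]
    have hoscP := S9.osc (Pprod M ω n) hPn (Q.mulVec V) V hY0 hY1 hYs
      hV0.le hV1.le (by linarith)
    have heq : Pprod M ω (n+m) = Pprod M ω n * Q := S9.Pprod_add M ω n m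
    have hxe : x ω (n+m) = nv ((Pprod M ω n).mulVec (Q.mulVec V)) := by
      rw [hxdef]
      simp only
      rw [heq, ← Matrix.mulVec_mulVec]
    calc |x ω (n+m) - x ω n| = |nv ((Pprod M ω n).mulVec (Q.mulVec V))
        - nv ((Pprod M ω n).mulVec V)| := by rw [hxe]
      _ ≤ S9.Df (Pprod M ω n) := hoscP
      _ ≤ B n := (main ω n).2.2
  have hcauchy : ∀ ω, ∃ l, Tendsto (x ω) atTop (nhds l) := by
    intro ω
    apply cauchySeq_tendsto_of_complete
    apply cauchySeq_of_le_tendsto_0 (fun N => 2 * B N) ?_ ?_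
    · intro n m N hn hm
      rw [Real.dist_eq]
      have e1 : |x ω n - x ω N| ≤ B N := by
        have h := hosc ω N (n - N)
        rwa [Nat.add_sub_cancel' hn] at h
      have e2 : |x ω m - x ω N| ≤ B N := by
        have h := hosc ω N (m - N)
        rwa [Nat.add_sub_cancel' hm] at h
      calc |x ω n - x ω m| ≤ |x ω n - x ω N| + |x ω N - x ω m| := abs_sub_le _ _ _
        _ ≤ B N + B N := add_le_add e1 (by rw [abs_sub_comm]; exact e2)
        _ = 2 * B N := by ring
    · have := hBtend.const_mul (2:ℝ)
      simpa using this
  choose L hL using hcauchy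
  have hLb : ∀ ω n, |L ω - x ω n| ≤ B n := by
    intro ω n
    have h1' : Tendsto (fun m => x ω (m + n)) atTop (nhds (L ω)) :=
      (hL ω).comp (tendsto_add_atTop_nat n)
    have h2' : Tendsto (fun m => |x ω (m + n) - x ω n|) atTop
        (nhds (|L ω - x ω n|)) := (h1'.sub tendsto_const_nhds).abs
    apply le_of_tendsto h2'
    filter_upwards with m
    rw [add_comm]
    exact hosc ω n m
  refine ⟨fun ω => ![L ω, 1 - L ω], ?_⟩
  rw [Metric.tendstoUniformly_iff]
  intro ε hε
  have hev : ∀ᶠ n in atTop, B n < ε := hBtend.eventually_lt_const hε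
  filter_upwards [hev] with n hn ω
  rw [dist_pi_lt_iff hε]
  intro i
  have hb : |L ω - x ω n| < ε := lt_of_le_of_lt (hLb ω n) hn
  fin_cases i
  · show dist (L ω) (nv ((Pprod M ω n).mulVec V)) < ε
    rw [Real.dist_eq]
    exact hb
  · show dist (1 - L ω) (1 - nv ((Pprod M ω n).mulVec V)) < ε
    rw [Real.dist_eq]
    have e : 1 - L ω - (1 - nv ((Pprod M ω n).mulVec V))
        = -(L ω - nv ((Pprod M ω n).mulVec V)) := by ring
    rw [e, abs_neg]
    exact hb
end

section
/- Suppose M satisfies: every matrix [[a,b],[0,d]] ∈ M has a < d; every matrix [[a,0],[c,d]] ∈ M has a > d; and whenever [[a,b],[c,0]] ∈ M and [[0,b'],[c',d']] ∈ M one has bc' < b'c. Then for every vector V = (v₁,v₂) with v₁, v₂ > 0, the sequence of maps ω ↦ N(Pₙ(ω)V) converges uniformly on S^ℕ. -/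
/-!
Write a positive vector through its log-ratio `u = log (x₁ / x₂)`. A matrix acts on `u` by
`u ↦ log ((a eᵘ + b) / (c eᵘ + d))`, whose derivative `det A · t / ((a t + b) (c t + d))`,
`t = eᵘ`, has absolute value `< 1` as soon as `a c > 0` or `b d > 0`. The hypotheses give an
`R > 0` separating the slopes `b / c` of the matrices with `d = 0` from those with `a = 0`;
then, for all small `m`, every matrix maps the ratio interval `[m, R / m]` into itself (each
endpoint condition is a quadratic in `m` whose lowest nonzero coefficient is positive). On this
compact interval all the maps are uniform contractions, so the backward compositions
`f_{ω₁} ∘ ⋯ ∘ f_{ωₙ}` applied to `log (v₁ / v₂)` converge uniformly in `ω` at a geometric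
rate, and `N` is a uniformly continuous function (a sigmoid) of the log-ratio.
-/

open Matrix Filter

open Set Filter Topology NNReal Real

section BackwardComp

variable {ι α : Type*} {g : ι → α → α} {J : Set α}

def backwardComp (g : ι → α → α) (ω : ℕ → ι) : ℕ → α → α
  | 0 => id
  | n + 1 => backwardComp g ω n ∘ g (ω n)

@[simp] theorem backwardComp_zero (ω : ℕ → ι) : backwardComp g ω 0 = id := rfl

@[simp] theorem backwardComp_succ (ω : ℕ → ι) (n : ℕ) :
    backwardComp g ω (n + 1) = backwardComp g ω n ∘ g (ω n) := rfl

theorem mapsTo_backwardComp (hg : ∀ i, MapsTo (g i) J J) (ω : ℕ → ι) (n : ℕ) :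
    MapsTo (backwardComp g ω n) J J := by
  induction n with
  | zero => exact mapsTo_id J
  | succ n ih => exact ih.comp (hg (ω n))

theorem backwardComp_semiconj {β : Type*} {h : ι → β → β} {P : Set β} {φ : β → α}
    (hh : ∀ i, MapsTo (h i) P P) (hφ : ∀ i, ∀ x ∈ P, φ (h i x) = g i (φ x))
    (ω : ℕ → ι) (n : ℕ) : ∀ x ∈ P, φ (backwardComp h ω n x) = backwardComp g ω n (φ x) := by
  induction n with
  | zero => exact fun _ _ => rfl
  | succ n ih =>
    intro x hx
    simp only [backwardComp_succ, Function.comp_apply]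
    rw [ih _ (hh _ hx), hφ _ _ hx]

theorem lipschitzOnWith_backwardComp [PseudoEMetricSpace α] {K : ℝ≥0}
    (hg : ∀ i, MapsTo (g i) J J) (hK : ∀ i, LipschitzOnWith K (g i) J) (ω : ℕ → ι) (n : ℕ) :
    LipschitzOnWith (K ^ n) (backwardComp g ω n) J := by
  induction n with
  | zero => simpa using LipschitzWith.id.lipschitzOnWith
  | succ n ih => rw [pow_succ]; exact ih.comp (hK (ω n)) (hg (ω n))

theorem exists_tendstoUniformly_backwardComp [PseudoMetricSpace α] [CompleteSpace α]
    (hJ : Bornology.IsBounded J) {K : ℝ≥0} (hK1 : K < 1) (hg : ∀ i, MapsTo (g i) J J)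
    (hK : ∀ i, LipschitzOnWith K (g i) J) {x : α} (hx : x ∈ J) :
    ∃ F : (ℕ → ι) → α, TendstoUniformly (fun n ω => backwardComp g ω n x) F atTop := by
  have hK1' : (K : ℝ) < 1 := hK1
  have hstep : ∀ ω n, dist (backwardComp g ω n x) (backwardComp g ω (n + 1) x)
      ≤ Metric.diam J * (K : ℝ) ^ n := fun ω n =>
    calc _ ≤ (K : ℝ) ^ n * dist x (g (ω n) x) := by
          simpa using (lipschitzOnWith_backwardComp hg hK ω n).dist_le_mul x hx _ (hg _ hx)
      _ ≤ (K : ℝ) ^ n * Metric.diam J := by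
          gcongr; exact Metric.dist_le_diam_of_mem hJ hx (hg _ hx)
      _ = _ := mul_comm _ _
  choose F hF using fun ω =>
    cauchySeq_tendsto_of_complete (cauchySeq_of_le_geometric _ _ hK1' (hstep ω))
  refine ⟨F, Metric.tendstoUniformly_iff.2 fun ε hε => ?_⟩
  have hrate : Tendsto (fun n => Metric.diam J * (K : ℝ) ^ n / (1 - K)) atTop (𝓝 0) := by
    simpa using ((tendsto_pow_atTop_nhds_zero_of_lt_one K.2 hK1').const_mul
      (Metric.diam J)).div_const (1 - (K : ℝ))
  filter_upwards [hrate.eventually (gt_mem_nhds hε)] with n hn ω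
  rw [dist_comm]
  exact (dist_le_of_le_geometric_of_tendsto _ _ hK1' (hstep ω) (hF ω) n).trans_lt hn

end BackwardComp

theorem exists_lipschitzOnWith_lt_one_of_abs_deriv_lt_one {f f' : ℝ → ℝ} {s : Set ℝ}
    (hs : IsCompact s) (hsc : Convex ℝ s) (hne : s.Nonempty)
    (hf : ∀ x ∈ s, HasDerivWithinAt f (f' x) s x) (hf' : ContinuousOn f' s)
    (hlt : ∀ x ∈ s, |f' x| < 1) : ∃ K : ℝ≥0, K < 1 ∧ LipschitzOnWith K f s := by
  obtain ⟨x₀, hx₀, hmax⟩ := hs.exists_isMaxOn hne hf'.nnnorm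
  refine ⟨‖f' x₀‖₊, ?_, hsc.lipschitzOnWith_of_nnnorm_hasDerivWithin_le hf fun x hx => hmax hx⟩
  rw [← NNReal.coe_lt_coe, coe_nnnorm, Real.norm_eq_abs]
  exact hlt x₀ hx₀

theorem eventually_nonneg_quadratic {a b c : ℝ} (ha : 0 ≤ a) (hb : a = 0 → 0 < b) :
    ∀ᶠ x in 𝓝[>] (0 : ℝ), 0 ≤ a + b * x + c * x ^ 2 := by
  rcases ha.eq_or_lt with rfl | ha
  · have hlin : ∀ᶠ x in 𝓝 (0 : ℝ), 0 < b + c * x :=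
      ((by fun_prop : Continuous fun x : ℝ => b + c * x).tendsto' 0 b
        (by simp)).eventually_const_lt (hb rfl)
    filter_upwards [nhdsWithin_le_nhds hlin, self_mem_nhdsWithin] with x hx hx0
    nlinarith [mul_pos (mem_Ioi.1 hx0) hx]
  · exact nhdsWithin_le_nhds <|
      (((by fun_prop : Continuous fun x : ℝ => a + b * x + c * x ^ 2).tendsto' 0 a
        (by simp)).eventually_const_lt ha).mono fun _ h => h.le

theorem exists_pos_slope_between {ι : Type*} [Fintype ι] {p q : ι → Prop} {b c : ι → ℝ}
    (hc : ∀ k, p k ∨ q k → 0 < c k) (hb : ∀ l, q l → 0 < b l)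
    (h : ∀ k l, p k → q l → b k * c l < b l * c k) :
    ∃ R, 0 < R ∧ (∀ k, p k → b k < c k * R) ∧ ∀ l, q l → c l * R < b l := by
  classical
  obtain ⟨R, hlow, hup⟩ := Finset.exists_between'
    (insert 0 ((Finset.univ.filter p).image fun k => b k / c k))
    ((Finset.univ.filter q).image fun l => b l / c l) <| by
      simp only [Finset.mem_insert, Finset.mem_image, Finset.mem_filter, Finset.mem_univ,
        true_and]
      rintro _ (rfl | ⟨k, hk, rfl⟩) _ ⟨l, hl, rfl⟩
      · exact div_pos (hb l hl) (hc l (.inr hl))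
      · rw [div_lt_div_iff₀ (hc k (.inl hk)) (hc l (.inr hl))]
        exact h k l hk hl
  refine ⟨R, hlow 0 (Finset.mem_insert_self _ _), fun k hk => ?_, fun l hl => ?_⟩
  · have := hlow _ (Finset.mem_insert_of_mem (Finset.mem_image_of_mem _ (by simpa using hk)))
    rwa [div_lt_iff₀ (hc k (.inl hk)), mul_comm] at this
  · have := hup _ (Finset.mem_image_of_mem _ (by simpa using hl))
    rwa [lt_div_iff₀ (hc l (.inr hl)), mul_comm] at this

theorem Real.lipschitzWith_sigmoid : LipschitzWith 1 Real.sigmoid := by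
  refine lipschitzWith_of_nnnorm_deriv_le differentiable_sigmoid fun x => ?_
  rw [Real.deriv_sigmoid, ← NNReal.coe_le_coe, coe_nnnorm, Real.norm_eq_abs, NNReal.coe_one,
    abs_le]
  constructor <;> nlinarith [Real.sigmoid_pos x, Real.sigmoid_lt_one x]

section TwoByTwo

variable {A : Matrix (Fin 2) (Fin 2) ℝ}

theorem ColAllowable.rowSum_pos (hA : ColAllowable A) (h1 : A 1 0 = 0 → A 0 0 < A 1 1)
    (h2 : A 0 1 = 0 → A 1 1 < A 0 0) : ∀ i, 0 < A i 0 + A i 1 := by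
  refine Fin.forall_fin_two.2 ⟨?_, ?_⟩
  · rcases (hA.1 0 1).eq_or_lt with hb | hb
    · linarith [h2 hb.symm, hA.1 1 1]
    · linarith [hA.1 0 0]
  · rcases (hA.1 1 0).eq_or_lt with hc | hc
    · linarith [h1 hc.symm, hA.1 0 0]
    · linarith [hA.1 1 1]

theorem ColAllowable.lowerLeft_pos (hA : ColAllowable A) (h1 : A 1 0 = 0 → A 0 0 < A 1 1)
    (had : A 0 0 = 0 ∨ A 1 1 = 0) : 0 < A 1 0 := by
  rcases (hA.1 1 0).eq_or_lt with hc | hc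
  · have := h1 hc.symm
    rcases had with ha | hd
    · linarith [hA.2.1]
    · linarith [hA.1 0 0]
  · exact hc

theorem ColAllowable.upperRight_pos (hA : ColAllowable A) (h2 : A 0 1 = 0 → A 1 1 < A 0 0)
    (ha : A 0 0 = 0) : 0 < A 0 1 := by
  rcases (hA.1 0 1).eq_or_lt with hb | hb
  · linarith [h2 hb.symm, hA.1 1 1]
  · exact hb

theorem ColAllowable.exists_col_pos (hA : ColAllowable A) (h1 : A 1 0 = 0 → A 0 0 < A 1 1)
    (h2 : A 0 1 = 0 → A 1 1 < A 0 0) (had : ¬(A 0 0 = 0 ∧ A 1 1 = 0)) :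
    0 < A 0 0 * A 1 0 ∨ 0 < A 0 1 * A 1 1 := by
  rcases (hA.1 0 0).eq_or_lt with ha | ha
  · have hd : 0 < A 1 1 := (hA.1 1 1).lt_of_ne fun hd => had ⟨ha.symm, hd.symm⟩
    exact .inr (mul_pos (hA.upperRight_pos h2 ha.symm) hd)
  rcases (hA.1 1 0).eq_or_lt with hc | hc
  · have hd := h1 hc.symm
    have hb : 0 < A 0 1 := (hA.1 0 1).lt_of_ne fun hb => (h2 hb.symm).not_gt hd
    exact .inr (mul_pos hb (ha.trans hd))
  · exact .inl (mul_pos ha hc)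

theorem row_mul_add_pos (hA : ∀ i j, 0 ≤ A i j) (hrow : ∀ i, 0 < A i 0 + A i 1) (i : Fin 2)
    {t : ℝ} (ht : 0 < t) : 0 < A i 0 * t + A i 1 := by
  have := hrow i
  rcases (hA i 0).eq_or_lt with h | h
  · rw [← h] at this ⊢
    simpa using this
  · nlinarith [hA i 1]

theorem mulVec_eq_mul_row (X : Fin 2 → ℝ) (hX : X 1 ≠ 0) (i : Fin 2) :
    (A *ᵥ X) i = X 1 * (A i 0 * (X 0 / X 1) + A i 1) := by
  simp only [mulVec, dotProduct, Fin.sum_univ_two]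
  field_simp

theorem mulVec_pos (hA : ∀ i j, 0 ≤ A i j) (hrow : ∀ i, 0 < A i 0 + A i 1)
    {X : Fin 2 → ℝ} (hX : ∀ i, 0 < X i) (i : Fin 2) : 0 < (A *ᵥ X) i := by
  rw [mulVec_eq_mul_row X (hX 1).ne']
  exact mul_pos (hX 1) (row_mul_add_pos hA hrow i (div_pos (hX 0) (hX 1)))

/-- The action of `A` on log-ratios `u = log (x₁ / x₂)`. -/
noncomputable def logRatioMap (A : Matrix (Fin 2) (Fin 2) ℝ) (u : ℝ) : ℝ :=
  log (A 0 0 * exp u + A 0 1) - log (A 1 0 * exp u + A 1 1)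

theorem log_ratio_mulVec (hA : ∀ i j, 0 ≤ A i j) (hrow : ∀ i, 0 < A i 0 + A i 1)
    {X : Fin 2 → ℝ} (hX : ∀ i, 0 < X i) :
    log ((A *ᵥ X) 0 / (A *ᵥ X) 1) = logRatioMap A (log (X 0 / X 1)) := by
  have ht := div_pos (hX 0) (hX 1)
  rw [mulVec_eq_mul_row X (hX 1).ne', mulVec_eq_mul_row X (hX 1).ne',
    mul_div_mul_left _ _ (hX 1).ne', log_div (row_mul_add_pos hA hrow 0 ht).ne'
      (row_mul_add_pos hA hrow 1 ht).ne', logRatioMap, exp_log ht]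

theorem hasDerivAt_logRatioMap (hA : ∀ i j, 0 ≤ A i j) (hrow : ∀ i, 0 < A i 0 + A i 1)
    (u : ℝ) : HasDerivAt (logRatioMap A)
      (A.det * exp u / ((A 0 0 * exp u + A 0 1) * (A 1 0 * exp u + A 1 1))) u := by
  have hpos i := row_mul_add_pos hA hrow i (exp_pos u)
  have hrow_deriv : ∀ i, HasDerivAt (fun w => A i 0 * exp w + A i 1) (A i 0 * exp u) u :=
    fun i => ((hasDerivAt_exp u).const_mul _).add_const _
  refine (((hrow_deriv 0).log (hpos 0).ne').sub ((hrow_deriv 1).log (hpos 1).ne')).congr_deriv ?_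
  rw [det_fin_two, div_sub_div _ _ (hpos 0).ne' (hpos 1).ne']
  ring

theorem abs_det_mul_lt (hA : ∀ i j, 0 ≤ A i j) (hcol : 0 < A 0 0 * A 1 0 ∨ 0 < A 0 1 * A 1 1)
    {t : ℝ} (ht : 0 < t) : |A.det| * t < (A 0 0 * t + A 0 1) * (A 1 0 * t + A 1 1) := by
  have had := mul_nonneg (hA 0 0) (hA 1 1)
  have hbc := mul_nonneg (hA 0 1) (hA 1 0)
  have hdet : |A.det| * t ≤ (A 0 0 * A 1 1 + A 0 1 * A 1 0) * t := by
    rw [det_fin_two]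
    exact mul_le_mul_of_nonneg_right (abs_sub_le_iff.2 ⟨by linarith, by linarith⟩) ht.le
  have hrest : 0 < A 0 0 * A 1 0 * t ^ 2 + A 0 1 * A 1 1 := by
    rcases hcol with h | h
    · nlinarith [mul_pos h (pow_pos ht 2), mul_nonneg (hA 0 1) (hA 1 1)]
    · nlinarith [mul_nonneg (mul_nonneg (hA 0 0) (hA 1 0)) (sq_nonneg t)]
  nlinarith

theorem exists_lipschitzOnWith_logRatioMap (hA : ∀ i j, 0 ≤ A i j)
    (hrow : ∀ i, 0 < A i 0 + A i 1) (hcol : 0 < A 0 0 * A 1 0 ∨ 0 < A 0 1 * A 1 1)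
    {a b : ℝ} (hab : a ≤ b) : ∃ K : ℝ≥0, K < 1 ∧ LipschitzOnWith K (logRatioMap A) (Icc a b) := by
  have hden (u : ℝ) : 0 < (A 0 0 * exp u + A 0 1) * (A 1 0 * exp u + A 1 1) :=
    mul_pos (row_mul_add_pos hA hrow 0 (exp_pos u)) (row_mul_add_pos hA hrow 1 (exp_pos u))
  refine exists_lipschitzOnWith_lt_one_of_abs_deriv_lt_one isCompact_Icc (convex_Icc a b)
    (nonempty_Icc.2 hab) (fun u _ => (hasDerivAt_logRatioMap hA hrow u).hasDerivWithinAt)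
    (Continuous.continuousOn ?_) fun u _ => ?_
  · exact Continuous.div (by fun_prop) (by fun_prop) fun u => (hden u).ne'
  · rw [abs_div, abs_mul, abs_exp, abs_of_pos (hden u), div_lt_one (hden u)]
    exact abs_det_mul_lt hA hcol (exp_pos u)

theorem mapsTo_logRatioMap_Icc (hA : ∀ i j, 0 ≤ A i j) (hrow : ∀ i, 0 < A i 0 + A i 1)
    {m T : ℝ} (hm : 0 < m) (hT : 0 < T)
    (hmm : m * (A 1 0 * m + A 1 1) ≤ A 0 0 * m + A 0 1)
    (hTm : m * (A 1 0 * T + A 1 1) ≤ A 0 0 * T + A 0 1)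
    (hmT : A 0 0 * m + A 0 1 ≤ T * (A 1 0 * m + A 1 1))
    (hTT : A 0 0 * T + A 0 1 ≤ T * (A 1 0 * T + A 1 1)) :
    MapsTo (logRatioMap A) (Icc (log m) (log T)) (Icc (log m) (log T)) := by
  rintro u ⟨hmu, huT⟩
  have htm : m ≤ exp u := (log_le_iff_le_exp hm).1 hmu
  have htT : exp u ≤ T := (le_log_iff_exp_le hT).1 huT
  have hnum := row_mul_add_pos hA hrow 0 (exp_pos u)
  have hden := row_mul_add_pos hA hrow 1 (exp_pos u)
  rw [logRatioMap, ← log_div hnum.ne' hden.ne']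
  refine ⟨log_le_log hm ((le_div_iff₀ hden).2 ?_), log_le_log (div_pos hnum hden)
    ((div_le_iff₀ hden).2 ?_)⟩
  -- both inequalities are affine in `exp u`, so they follow from their endpoint cases
  · rcases le_total (m * A 1 0) (A 0 0) with h | h
    · nlinarith [mul_nonneg (sub_nonneg.2 h) (sub_nonneg.2 htm)]
    · nlinarith [mul_nonneg (sub_nonneg.2 h) (sub_nonneg.2 htT)]
  · rcases le_total (A 0 0) (T * A 1 0) with h | h
    · nlinarith [mul_nonneg (sub_nonneg.2 h) (sub_nonneg.2 htm)]
    · nlinarith [mul_nonneg (sub_nonneg.2 h) (sub_nonneg.2 htT)]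

theorem eventually_mapsTo_logRatioMap (hA : ∀ i j, 0 ≤ A i j)
    (hrow : ∀ i, 0 < A i 0 + A i 1) (h1 : A 1 0 = 0 → A 0 0 < A 1 1)
    (h2 : A 0 1 = 0 → A 1 1 < A 0 0) {R : ℝ} (hR : 0 < R)
    (hRa : A 0 0 = 0 → A 1 0 * R < A 0 1) (hRd : A 1 1 = 0 → A 0 1 < A 1 0 * R) :
    ∀ᶠ m in 𝓝[>] 0,
      MapsTo (logRatioMap A) (Icc (log m) (log (R / m))) (Icc (log m) (log (R / m))) := by
  -- the four endpoint conditions for `[m, R / m]`, multiplied by `1`, `m`, `m`, `m ^ 2`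
  filter_upwards [
    eventually_nonneg_quadratic (c := -A 1 0) (hA 0 1) fun h => sub_pos.2 (h2 h),
    eventually_nonneg_quadratic (c := -A 1 1) (mul_nonneg (hA 0 0) hR.le)
      fun h => sub_pos.2 (hRa ((mul_eq_zero.1 h).resolve_right hR.ne')),
    eventually_nonneg_quadratic (c := -A 0 0) (mul_nonneg (hA 1 1) hR.le)
      fun h => sub_pos.2 (hRd ((mul_eq_zero.1 h).resolve_right hR.ne')),
    eventually_nonneg_quadratic (c := -A 0 1) (mul_nonneg (hA 1 0) (sq_nonneg R))
      fun h => mul_pos (sub_pos.2 (h1 ((mul_eq_zero.1 h).resolve_right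
        (pow_ne_zero 2 hR.ne')))) hR,
    self_mem_nhdsWithin] with m q₁ q₂ q₃ q₄ (hm : 0 < m)
  have hmT : m * (R / m) = R := mul_div_cancel₀ R hm.ne'
  refine mapsTo_logRatioMap_Icc hA hrow hm (div_pos hR hm) (by linear_combination q₁) ?_ ?_ ?_
  · refine le_of_mul_le_mul_left ?_ hm
    linear_combination q₂ - (A 0 0 - A 1 0 * m) * hmT
  · refine le_of_mul_le_mul_left ?_ hm
    linear_combination q₃ - (A 1 0 * m + A 1 1) * hmT
  · refine le_of_mul_le_mul_left ?_ (pow_pos hm 2)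
    linear_combination q₄ - (A 1 0 * (m * (R / m) + R) + (A 1 1 - A 0 0) * m) * hmT

end TwoByTwo

theorem eventually_log_mem_Icc {t R : ℝ} (ht : 0 < t) (hR : 0 < R) :
    ∀ᶠ m in 𝓝[>] 0, log t ∈ Icc (log m) (log (R / m)) := by
  filter_upwards [nhdsWithin_le_nhds (eventually_lt_nhds (lt_min ht (div_pos hR ht))),
    self_mem_nhdsWithin] with m hmt (hm : 0 < m)
  refine ⟨log_le_log hm (hmt.le.trans (min_le_left _ _)), log_le_log ht ?_⟩
  rw [le_div_iff₀ hm, mul_comm, ← le_div_iff₀ ht]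
  exact hmt.le.trans (min_le_right _ _)

theorem nv_eq_sigmoid {X : Fin 2 → ℝ} (hX : ∀ i, 0 < X i) :
    nv X = sigmoid (log (X 0 / X 1)) := by
  have := hX 0
  have := hX 1
  rw [nv, sigmoid, exp_neg, exp_log (by positivity)]
  field_simp

theorem uniformContinuous_sigmoid_pair :
    UniformContinuous fun u => ![sigmoid u, 1 - sigmoid u] := by
  have h := lipschitzWith_sigmoid.uniformContinuous
  refine uniformContinuous_pi.2 (Fin.forall_fin_two.2 ⟨?_, ?_⟩)
  · simpa using h
  · simpa using uniformContinuous_const.sub h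

theorem Pprod_succ {s : ℕ} (M : Fin s → Matrix (Fin 2) (Fin 2) ℝ) (ω : ℕ → Fin s) (n : ℕ) :
    Pprod M ω (n + 1) = Pprod M ω n * M (ω n) := by
  simp [Pprod, List.range_succ]

theorem Pprod_mulVec {s : ℕ} (M : Fin s → Matrix (Fin 2) (Fin 2) ℝ) (ω : ℕ → Fin s) (n : ℕ)
    (X : Fin 2 → ℝ) : Pprod M ω n *ᵥ X = backwardComp (fun k => (M k *ᵥ ·)) ω n X := by
  induction n generalizing X with
  | zero => simp [Pprod]
  | succ n ih => rw [Pprod_succ, ← mulVec_mulVec, ih]; rfl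

theorem exists_tendstoUniformly_Nv_of_mapsTo {s : ℕ} (M : Fin s → Matrix (Fin 2) (Fin 2) ℝ)
    (hA : ∀ k i j, 0 ≤ M k i j) (hrow : ∀ k i, 0 < M k i 0 + M k i 1)
    (hcol : ∀ k, 0 < M k 0 0 * M k 1 0 ∨ 0 < M k 0 1 * M k 1 1) {a b : ℝ}
    (hmaps : ∀ k, MapsTo (logRatioMap (M k)) (Icc a b) (Icc a b))
    {V : Fin 2 → ℝ} (hV : ∀ i, 0 < V i) (hVJ : log (V 0 / V 1) ∈ Icc a b) :
    ∃ F, TendstoUniformly (fun n ω => Nv (Pprod M ω n *ᵥ V)) F atTop := by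
  choose K hK1 hK using fun k =>
    exists_lipschitzOnWith_logRatioMap (hA k) (hrow k) (hcol k) (hVJ.1.trans hVJ.2)
  obtain ⟨F, hF⟩ := exists_tendstoUniformly_backwardComp (Metric.isBounded_Icc a b)
    ((Finset.sup_lt_iff zero_lt_one).2 fun k _ => hK1 k) hmaps
    (fun k => (hK k).weaken (Finset.le_sup (Finset.mem_univ k))) hVJ
  refine ⟨(fun u => ![sigmoid u, 1 - sigmoid u]) ∘ F, ?_⟩
  convert uniformContinuous_sigmoid_pair.comp_tendstoUniformly hF using 1
  funext n ω
  have hpos : ∀ k, MapsTo (M k *ᵥ ·) {X | ∀ i, 0 < X i} {X | ∀ i, 0 < X i} :=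
    fun k _ hX => mulVec_pos (hA k) (hrow k) hX
  have hX : ∀ i, 0 < (Pprod M ω n *ᵥ V) i :=
    Pprod_mulVec M ω n V ▸ mapsTo_backwardComp hpos ω n hV
  have hlog : log ((Pprod M ω n *ᵥ V) 0 / (Pprod M ω n *ᵥ V) 1)
      = backwardComp (fun k => logRatioMap (M k)) ω n (log (V 0 / V 1)) := by
    rw [Pprod_mulVec]
    exact backwardComp_semiconj (φ := fun X => log (X 0 / X 1)) hpos
      (fun k _ hX => log_ratio_mulVec (hA k) (hrow k) hX) ω n V hV
  rw [Function.comp_apply, Nv, nv_eq_sigmoid hX, hlog]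

theorem stmt10 (s : ℕ) (M : Fin s → Matrix (Fin 2) (Fin 2) ℝ)
    (hM : ∀ k, ColAllowable (M k))
    (h1 : ∀ k, M k 1 0 = 0 → M k 0 0 < M k 1 1)
    (h2 : ∀ k, M k 0 1 = 0 → M k 1 1 < M k 0 0)
    (h3 : ∀ k l, M k 1 1 = 0 → M l 0 0 = 0 →
      M k 0 1 * M l 1 0 < M l 0 1 * M k 1 0) :
    ∀ V : Fin 2 → ℝ, 0 < V 0 → 0 < V 1 →
      ∃ F : (ℕ → Fin s) → (Fin 2 → ℝ),
        TendstoUniformly (fun n ω => Nv ((Pprod M ω n).mulVec V)) F atTop := by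
  intro V hV0 hV1
  have hrow k := (hM k).rowSum_pos (h1 k) (h2 k)
  obtain ⟨R, hR, hRd, hRa⟩ := exists_pos_slope_between
    (p := fun k => M k 1 1 = 0) (q := fun k => M k 0 0 = 0)
    (fun k hk => (hM k).lowerLeft_pos (h1 k) hk.symm) (fun l => (hM l).upperRight_pos (h2 l)) h3
  obtain ⟨m, hmaps, hVm⟩ := ((eventually_all.2 fun k =>
    eventually_mapsTo_logRatioMap (hM k).1 (hrow k) (h1 k) (h2 k) hR (hRa k) (hRd k)).and
    (eventually_log_mem_Icc (div_pos hV0 hV1) hR)).exists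
  exact exists_tendstoUniformly_Nv_of_mapsTo M (fun k => (hM k).1) hrow
    (fun k => (hM k).exists_col_pos (h1 k) (h2 k) fun ⟨ha, hd⟩ => lt_irrefl _ (h3 k k hd ha))
    hmaps (Fin.forall_fin_two.2 ⟨hV0, hV1⟩) hVm
end
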